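/- arXiv:1402.4326 — 9 statements merged into one kernel-verified Lean document; each statement's English description precedes it below -/
import Mathlib

section
/- If A and B are symmetric real matrices with A → B and B → A (i.e., each is obtained from the other by a congruence Pᵀ·P), then A and B have the same number of positive eigenvalues and the same number of negative eigenvalues. -/
/-!
Both counts are congruence invariants of the quadratic form `x ↦ xᵀ A x`: the number of positive
eigenvalues is its positive index, the largest dimension of a subspace on which it is positive
definite. If `B = Pᵀ A P`, then `x ↦ P x` maps a subspace on which `B` is positive definite
injectively onto one on which `A` is, so the positive index of `B` is at most that of `A`; the
congruences in both directions give equality. The orthogonal eigenvector matrix of a symmetric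
matrix is a congruence (in both directions) to the diagonal matrix of its eigenvalues, whose
positive index is the number of positive entries by Sylvester's law of inertia.
-/

open Matrix QuadraticMap

namespace QuadraticForm

variable {𝕜 M M' : Type*} [Field 𝕜] [LinearOrder 𝕜] [AddCommGroup M] [AddCommGroup M']
  [Module 𝕜 M] [Module 𝕜 M'] [FiniteDimensional 𝕜 M] [FiniteDimensional 𝕜 M']

lemma sigPos_comp_le (Q : QuadraticForm 𝕜 M) (f : M' →ₗ[𝕜] M) : sigPos (Q.comp f) ≤ sigPos Q := by
  obtain ⟨V, hV, hpos⟩ := exists_finrank_eq_sigPos_and_posDef (Q.comp f)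
  have hpos' : ∀ v ∈ V, v ≠ 0 → 0 < Q (f v) := fun v hv hne ↦
    hpos ⟨v, hv⟩ (by simpa using hne)
  have hinj : Function.Injective (f.domRestrict V) := by
    rw [← LinearMap.ker_eq_bot, LinearMap.ker_eq_bot']
    rintro ⟨v, hv⟩ hfv
    by_contra hne
    have hfv : f v = 0 := by simpa using hfv
    simpa [hfv] using hpos' v hv (by simpa using hne)
  rw [← hV, ← LinearMap.finrank_range_of_inj hinj, LinearMap.range_domRestrict]
  refine le_sigPos_of_posDef Q fun ⟨x, hx⟩ hne ↦ ?_
  obtain ⟨v, hv, rfl⟩ := Submodule.mem_map.mp hx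
  exact hpos' v hv (by rintro rfl; simp at hne)

lemma sigNeg_comp_le (Q : QuadraticForm 𝕜 M) (f : M' →ₗ[𝕜] M) : sigNeg (Q.comp f) ≤ sigNeg Q :=
  sigPos_comp_le (-Q) f

end QuadraticForm

namespace Matrix

variable {R m n : Type*} [Fintype m] [Fintype n] [DecidableEq m] [DecidableEq n]

lemma toQuadraticForm'_transpose_mul_mul [CommRing R] (A : Matrix m m R) (P : Matrix m n R) :
    (Pᵀ * A * P).toQuadraticForm' = A.toQuadraticForm'.comp (toLin' P) := by
  ext x
  simp [toQuadraticForm', ← toLinearMap₂'_comp]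

lemma toQuadraticForm'_diagonal [CommRing R] (w : n → R) :
    (diagonal w).toQuadraticForm' = weightedSumSquares R w := by
  ext x
  simp only [toQuadraticForm', LinearMap.BilinMap.toQuadraticMap_apply, toLinearMap₂'_apply',
    mulVec_diagonal, dotProduct, weightedSumSquares_apply, smul_eq_mul]
  exact Finset.sum_congr rfl fun i _ ↦ by ring

section Congruent

variable {𝕜 : Type*} [Field 𝕜] [LinearOrder 𝕜] {A : Matrix m m 𝕜} {B : Matrix n n 𝕜}
  {P : Matrix m n 𝕜} {Q : Matrix n m 𝕜}

lemma sigPos_toQuadraticForm'_eq_of_congruent (hP : Pᵀ * A * P = B) (hQ : Qᵀ * B * Q = A) :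
    sigPos A.toQuadraticForm' = sigPos B.toQuadraticForm' := by
  apply le_antisymm
  · rw [← hQ, toQuadraticForm'_transpose_mul_mul]
    exact QuadraticForm.sigPos_comp_le _ _
  · rw [← hP, toQuadraticForm'_transpose_mul_mul]
    exact QuadraticForm.sigPos_comp_le _ _

lemma sigNeg_toQuadraticForm'_eq_of_congruent (hP : Pᵀ * A * P = B) (hQ : Qᵀ * B * Q = A) :
    sigNeg A.toQuadraticForm' = sigNeg B.toQuadraticForm' := by
  apply le_antisymm
  · rw [← hQ, toQuadraticForm'_transpose_mul_mul]
    exact QuadraticForm.sigNeg_comp_le _ _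
  · rw [← hP, toQuadraticForm'_transpose_mul_mul]
    exact QuadraticForm.sigNeg_comp_le _ _

end Congruent

namespace IsHermitian

lemma transpose_eigenvectorUnitary_mul_mul {A : Matrix n n ℝ} (hA : A.IsHermitian) :
    (hA.eigenvectorUnitary : Matrix n n ℝ)ᵀ * A * hA.eigenvectorUnitary =
      diagonal hA.eigenvalues := by
  simpa [Unitary.conjStarAlgAut_apply, star_eq_conjTranspose, RCLike.ofReal_real_eq_id] using
    hA.conjStarAlgAut_star_eigenvectorUnitary

lemma eigenvectorUnitary_mul_diagonal_mul_transpose {A : Matrix n n ℝ} (hA : A.IsHermitian) :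
    (hA.eigenvectorUnitary : Matrix n n ℝ) * diagonal hA.eigenvalues *
      (hA.eigenvectorUnitary : Matrix n n ℝ)ᵀ = A := by
  simpa [Unitary.conjStarAlgAut_apply, star_eq_conjTranspose, RCLike.ofReal_real_eq_id] using
    hA.spectral_theorem.symm

lemma sigPos_toQuadraticForm' {A : Matrix n n ℝ} (hA : A.IsHermitian) :
    sigPos A.toQuadraticForm' = Fintype.card {i // 0 < hA.eigenvalues i} := by
  rw [sigPos_toQuadraticForm'_eq_of_congruent hA.transpose_eigenvectorUnitary_mul_mul
      (by rw [transpose_transpose]; exact hA.eigenvectorUnitary_mul_diagonal_mul_transpose),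
    toQuadraticForm'_diagonal, QuadraticForm.sigPos_weightedSumSquares, ← Nat.card_coe_set_eq,
    Nat.card_eq_fintype_card]
  rfl

lemma sigNeg_toQuadraticForm' {A : Matrix n n ℝ} (hA : A.IsHermitian) :
    sigNeg A.toQuadraticForm' = Fintype.card {i // hA.eigenvalues i < 0} := by
  rw [sigNeg_toQuadraticForm'_eq_of_congruent hA.transpose_eigenvectorUnitary_mul_mul
      (by rw [transpose_transpose]; exact hA.eigenvectorUnitary_mul_diagonal_mul_transpose),
    toQuadraticForm'_diagonal, QuadraticForm.sigNeg_weightedSumSquares, ← Nat.card_coe_set_eq,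
    Nat.card_eq_fintype_card]
  rfl

end IsHermitian

end Matrix

/-- If symmetric real matrices `A` and `B` satisfy `A → B` and `B → A`
(each obtained from the other by a congruence `Pᵀ · P`), then they have the same number of
positive eigenvalues and the same number of negative eigenvalues. -/
theorem stmt2 {m n : Type*} [Fintype m] [Fintype n] [DecidableEq m] [DecidableEq n]
    (A : Matrix m m ℝ) (B : Matrix n n ℝ)
    (hA : A.IsHermitian) (hB : B.IsHermitian)
    (hAB : ∃ P : Matrix m n ℝ, Pᵀ * A * P = B)
    (hBA : ∃ Q : Matrix n m ℝ, Qᵀ * B * Q = A) :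
    Fintype.card {i // 0 < hA.eigenvalues i} = Fintype.card {i // 0 < hB.eigenvalues i} ∧
      Fintype.card {i // hA.eigenvalues i < 0} = Fintype.card {i // hB.eigenvalues i < 0} := by
  obtain ⟨P, hP⟩ := hAB
  obtain ⟨Q, hQ⟩ := hBA
  rw [← hA.sigPos_toQuadraticForm', ← hB.sigPos_toQuadraticForm',
    ← hA.sigNeg_toQuadraticForm', ← hB.sigNeg_toQuadraticForm']
  exact ⟨sigPos_toQuadraticForm'_eq_of_congruent hP hQ,
    sigNeg_toQuadraticForm'_eq_of_congruent hP hQ⟩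
end

section
/- Let A = [[A₁₁, A₁₂, 0],[A₂₁, A₂₂, A₂₃],[0, A₃₂, A₃₃]] be a symmetric n×n real matrix with A₁₁ of size k×k and A₂₂ of size m×m. Suppose that for every vector x in the kernel of the block-diagonal matrix diag(A₁₁, A₃₃), we have [A₂₁, A₂₃] x = 0. Then there exists a k×m real matrix Y with A₁₁ Y = A₁₂, and for any such Y, the matrix A is related by mutual congruence-arrows (A ↔ B, i.e., A → B and B → A) to the block diagonal sum [[A₁₁, A₁₂],[A₂₁, Yᵀ A₁₁ Y]] ⊕ [[A₂₂ − Yᵀ A₁₁ Y, A₂₃],[A₃₂, A₃₃]]. -/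
/-!
Write `B ⊕ₘ C` for the sum of `B` on `k ⊕ m` and `C` on `m ⊕ r` overlapping in the `m × m` block.
The matrix of the theorem is `B ⊕ₘ C` with `B = [[A₁₁, A₁₂], [A₂₁, Yᵀ A₁₁ Y]]` and
`C = [[A₂₂ - Yᵀ A₁₁ Y, A₂₃], [A₃₂, A₃₃]]`. The congruence `B ⊕ C → B ⊕ₘ C` holds for all `B`, `C`,
via the embedding `(x₁, x₂, x₃) ↦ ((x₁, x₂), (x₂, x₃))`. Conversely, `A₁₂ = A₁₁ Y` makes
`B = Eᵀ A₁₁ E` with `E = [1, Y]`, and the substitution `x₁ ↦ x₁ + Y (x₂ - y₂)` decouples the two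
summands. `Y` exists because the kernel hypothesis, restricted to vectors supported on the first
block, says `ker A₁₁ᵀ = ker A₁₁ ⊆ ker A₁₂ᵀ`, i.e. the columns of `A₁₂` lie in `range A₁₁`.
-/

open Matrix

namespace Matrix

section Field

variable {K m n p : Type*} [Field K] [Fintype m] [Fintype n]

theorem exists_mulVec_eq_of_forall_vecMul_eq_zero (M : Matrix m n K) (c : m → K)
    (hc : ∀ x, x ᵥ* M = 0 → x ⬝ᵥ c = 0) : ∃ y, M *ᵥ y = c := by
  classical
  let B : (m → K) →ₗ[K] (n → K) →ₗ[K] K := (dotProductBilin K K).compl₂ M.mulVecLin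
  have hmem : dotProductBilin K K c ∈ (LinearMap.ker B).dualAnnihilator := by
    refine (Submodule.mem_dualAnnihilator _).2 fun x hx => ?_
    have hxM : x ᵥ* M = 0 := funext fun j =>
      (by simpa [B] using LinearMap.congr_fun hx (Pi.single j 1) : x ⬝ᵥ M.col j = 0)
    simpa [dotProduct_comm] using hc x hxM
  rw [LinearMap.dualAnnihilator_ker_eq_range_flip] at hmem
  obtain ⟨y, hy⟩ := hmem
  exact ⟨y, funext fun i => by simpa [B] using LinearMap.congr_fun hy (Pi.single i 1)⟩

theorem exists_mul_eq_of_forall_vecMul_eq_zero (M : Matrix m n K) (C : Matrix m p K)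
    (hC : ∀ x, x ᵥ* M = 0 → x ᵥ* C = 0) : ∃ Y : Matrix n p K, M * Y = C := by
  choose y hy using fun j => M.exists_mulVec_eq_of_forall_vecMul_eq_zero (Cᵀ j)
    fun x hx => by simpa [vecMul, dotProduct] using congrFun (hC x hx) j
  exact ⟨(of y)ᵀ, ext fun i j => by simpa [mul_apply, mulVec, dotProduct] using congrFun (hy j) i⟩

end Field

theorem fromRows_add_fromRows {α m₁ m₂ n : Type*} [Add α] (A₁ B₁ : Matrix m₁ n α)
    (A₂ B₂ : Matrix m₂ n α) : fromRows A₁ A₂ + fromRows B₁ B₂ = fromRows (A₁ + B₁) (A₂ + B₂) := by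
  ext (_ | _) _ <;> rfl

theorem fromCols_add_fromCols {α m n₁ n₂ : Type*} [Add α] (A₁ B₁ : Matrix m n₁ α)
    (A₂ B₂ : Matrix m n₂ α) : fromCols A₁ A₂ + fromCols B₁ B₂ = fromCols (A₁ + B₁) (A₂ + B₂) := by
  ext _ (_ | _) <;> rfl

section SubdirectSum

variable {α k m r : Type*} [CommRing α] [Fintype k] [Fintype m] [Fintype r]
  [DecidableEq k] [DecidableEq m] [DecidableEq r]

theorem exists_transpose_mul_blockDiag_mul_eq_subdirectSum
    (B₁₁ : Matrix k k α) (B₁₂ : Matrix k m α) (B₂₁ : Matrix m k α) (B₂₂ : Matrix m m α)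
    (C₁₁ : Matrix m m α) (C₁₂ : Matrix m r α) (C₂₁ : Matrix r m α) (C₂₂ : Matrix r r α) :
    ∃ Q : Matrix ((k ⊕ m) ⊕ (m ⊕ r)) (k ⊕ (m ⊕ r)) α,
      Qᵀ * fromBlocks (fromBlocks B₁₁ B₁₂ B₂₁ B₂₂) 0 0 (fromBlocks C₁₁ C₁₂ C₂₁ C₂₂) * Q =
        fromBlocks B₁₁ (fromCols B₁₂ 0) (fromRows B₂₁ 0) (fromBlocks (B₂₂ + C₁₁) C₁₂ C₂₁ C₂₂) :=
  ⟨fromBlocks (fromRows 1 0) (fromBlocks 0 0 1 0) 0 1, by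
    simp [fromBlocks_transpose, transpose_fromRows, fromBlocks_multiply, fromCols_mul_fromBlocks,
      fromBlocks_mul_fromRows, fromCols_mul_fromRows, fromBlocks_add]⟩

theorem exists_transpose_mul_subdirectSum_mul_eq_blockDiag
    (A : Matrix k k α) (Y : Matrix k m α) (D : Matrix m m α)
    (C₁₂ : Matrix m r α) (C₂₁ : Matrix r m α) (C₂₂ : Matrix r r α) :
    ∃ P : Matrix (k ⊕ (m ⊕ r)) ((k ⊕ m) ⊕ (m ⊕ r)) α,
      Pᵀ * fromBlocks A (fromCols (A * Y) 0) (fromRows (Yᵀ * A) 0) (fromBlocks D C₁₂ C₂₁ C₂₂) * P =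
        fromBlocks (fromBlocks A (A * Y) (Yᵀ * A) (Yᵀ * A * Y)) 0 0
          (fromBlocks (D - Yᵀ * A * Y) C₁₂ C₂₁ C₂₂) := by
  refine ⟨fromBlocks (fromCols 1 Y) (fromCols (-Y) 0) 0 1, ?_⟩
  simp [fromBlocks_transpose, transpose_fromCols, fromBlocks_multiply, fromRows_add_fromRows,
    fromCols_add_fromCols, Matrix.mul_assoc]
  rw [← fromRows_zero, fromCols_fromRows_eq_fromBlocks, fromBlocks_add]
  simp [sub_eq_neg_add]

end SubdirectSum

end Matrix

theorem stmt6_general {k m r : ℕ}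
    (A₁₁ : Matrix (Fin k) (Fin k) ℝ) (A₁₂ : Matrix (Fin k) (Fin m) ℝ)
    (A₂₁ : Matrix (Fin m) (Fin k) ℝ) (A₂₂ : Matrix (Fin m) (Fin m) ℝ)
    (A₂₃ : Matrix (Fin m) (Fin r) ℝ) (A₃₂ : Matrix (Fin r) (Fin m) ℝ)
    (A₃₃ : Matrix (Fin r) (Fin r) ℝ)
    (h11 : A₁₁ᵀ = A₁₁)
    (h21 : A₂₁ = A₁₂ᵀ)
    (hker : ∀ x : Fin k ⊕ Fin r → ℝ,
      (fromBlocks A₁₁ 0 0 A₃₃).mulVec x = 0 → (fromCols A₂₁ A₂₃).mulVec x = 0) :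
    (∃ Y : Matrix (Fin k) (Fin m) ℝ, A₁₁ * Y = A₁₂) ∧
    ∀ Y : Matrix (Fin k) (Fin m) ℝ, A₁₁ * Y = A₁₂ →
      (∃ P : Matrix (Fin k ⊕ (Fin m ⊕ Fin r)) ((Fin k ⊕ Fin m) ⊕ (Fin m ⊕ Fin r)) ℝ,
          Pᵀ * (fromBlocks A₁₁ (fromCols A₁₂ 0) (fromRows A₂₁ 0)
                  (fromBlocks A₂₂ A₂₃ A₃₂ A₃₃)) * P =
            fromBlocks (fromBlocks A₁₁ A₁₂ A₂₁ (Yᵀ * A₁₁ * Y)) 0 0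
              (fromBlocks (A₂₂ - Yᵀ * A₁₁ * Y) A₂₃ A₃₂ A₃₃)) ∧
      (∃ Q : Matrix ((Fin k ⊕ Fin m) ⊕ (Fin m ⊕ Fin r)) (Fin k ⊕ (Fin m ⊕ Fin r)) ℝ,
          Qᵀ * (fromBlocks (fromBlocks A₁₁ A₁₂ A₂₁ (Yᵀ * A₁₁ * Y)) 0 0
                  (fromBlocks (A₂₂ - Yᵀ * A₁₁ * Y) A₂₃ A₃₂ A₃₃)) * Q =
            fromBlocks A₁₁ (fromCols A₁₂ 0) (fromRows A₂₁ 0)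
              (fromBlocks A₂₂ A₂₃ A₃₂ A₃₃)) := by
  have hleft : ∀ x, x ᵥ* A₁₁ = 0 → x ᵥ* A₁₂ = 0 := by
    intro x hx
    have hx' : A₁₁ *ᵥ x = 0 := by rwa [← vecMul_transpose, h11]
    have h := hker (Sum.elim x 0) (by simp [fromBlocks_mulVec, hx'])
    simpa [fromCols_mulVec_sumElim, h21, mulVec_transpose] using h
  refine ⟨exists_mul_eq_of_forall_vecMul_eq_zero A₁₁ A₁₂ hleft, fun Y hY => ?_⟩
  subst hY
  obtain rfl : A₂₁ = Yᵀ * A₁₁ := by rw [h21, transpose_mul, h11]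
  refine ⟨exists_transpose_mul_subdirectSum_mul_eq_blockDiag _ _ _ _ _ _, ?_⟩
  simpa using exists_transpose_mul_blockDiag_mul_eq_subdirectSum
    A₁₁ (A₁₁ * Y) (Yᵀ * A₁₁) (Yᵀ * A₁₁ * Y) (A₂₂ - Yᵀ * A₁₁ * Y) A₂₃ A₃₂ A₃₃

/-- Let `A = [[A₁₁, A₁₂, 0],[A₂₁, A₂₂, A₂₃],[0, A₃₂, A₃₃]]` be symmetric with
`A₁₁` of size `k×k` and `A₂₂` of size `m×m`.  If every `x ∈ ker (diag(A₁₁, A₃₃))` satisfies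
`[A₂₁, A₂₃] x = 0`, then there exists `Y` with `A₁₁ Y = A₁₂`, and for every such `Y`,
`A ↔ [[A₁₁, A₁₂],[A₂₁, Yᵀ A₁₁ Y]] ⊕ [[A₂₂ − Yᵀ A₁₁ Y, A₂₃],[A₃₂, A₃₃]]`. -/
theorem stmt6 {k m r : ℕ}
    (A₁₁ : Matrix (Fin k) (Fin k) ℝ) (A₁₂ : Matrix (Fin k) (Fin m) ℝ)
    (A₂₁ : Matrix (Fin m) (Fin k) ℝ) (A₂₂ : Matrix (Fin m) (Fin m) ℝ)
    (A₂₃ : Matrix (Fin m) (Fin r) ℝ) (A₃₂ : Matrix (Fin r) (Fin m) ℝ)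
    (A₃₃ : Matrix (Fin r) (Fin r) ℝ)
    (h11 : A₁₁ᵀ = A₁₁) (h22 : A₂₂ᵀ = A₂₂) (h33 : A₃₃ᵀ = A₃₃)
    (h21 : A₂₁ = A₁₂ᵀ) (h32 : A₃₂ = A₂₃ᵀ)
    (hker : ∀ x : Fin k ⊕ Fin r → ℝ,
      (fromBlocks A₁₁ 0 0 A₃₃).mulVec x = 0 → (fromCols A₂₁ A₂₃).mulVec x = 0) :
    (∃ Y : Matrix (Fin k) (Fin m) ℝ, A₁₁ * Y = A₁₂) ∧
    ∀ Y : Matrix (Fin k) (Fin m) ℝ, A₁₁ * Y = A₁₂ →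
      (∃ P : Matrix (Fin k ⊕ (Fin m ⊕ Fin r)) ((Fin k ⊕ Fin m) ⊕ (Fin m ⊕ Fin r)) ℝ,
          Pᵀ * (fromBlocks A₁₁ (fromCols A₁₂ 0) (fromRows A₂₁ 0)
                  (fromBlocks A₂₂ A₂₃ A₃₂ A₃₃)) * P =
            fromBlocks (fromBlocks A₁₁ A₁₂ A₂₁ (Yᵀ * A₁₁ * Y)) 0 0
              (fromBlocks (A₂₂ - Yᵀ * A₁₁ * Y) A₂₃ A₃₂ A₃₃)) ∧
      (∃ Q : Matrix ((Fin k ⊕ Fin m) ⊕ (Fin m ⊕ Fin r)) (Fin k ⊕ (Fin m ⊕ Fin r)) ℝ,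
          Qᵀ * (fromBlocks (fromBlocks A₁₁ A₁₂ A₂₁ (Yᵀ * A₁₁ * Y)) 0 0
                  (fromBlocks (A₂₂ - Yᵀ * A₁₁ * Y) A₂₃ A₃₂ A₃₃)) * Q =
            fromBlocks A₁₁ (fromCols A₁₂ 0) (fromRows A₂₁ 0)
              (fromBlocks A₂₂ A₂₃ A₃₂ A₃₃)) :=
  stmt6_general A₁₁ A₁₂ A₂₁ A₂₂ A₂₃ A₃₂ A₃₃ h11 h21 hker
end

section
/- Let A = [[A₁₁, A₁₂, 0],[A₂₁, A₂₂, A₂₃],[0, A₃₂, A₃₃]] be a symmetric n×n real matrix with A₁₁ of size k×k and A₂₂ of size m×m. Then at least one of the following holds: (i) there exists a k×m real matrix Y such that A ↔ [[A₁₁, A₁₂],[A₂₁, Yᵀ A₁₁ Y]] ⊕ [[A₂₂ − Yᵀ A₁₁ Y, A₂₃],[A₃₂, A₃₃]]; or (ii) there exists a nonzero vector z ∈ ℝ^m such that A ↔ [[0, 0, zᵀ, 0],[0, A₁₁, A₁₂, 0],[z, A₂₁, A₂₂, A₂₃],[0, 0, A₃₂, A₃₃]]. -/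
/-!
If `ker A₁₁ ⊆ ker A₂₁`, then `A₂₁ = X A₁₁` for some `X`, so `Y = Xᵀ` solves `A₁₁ Y = A₁₂`
(`A₁₁` is symmetric), and the substitution `x₁ ↦ x₁ + Y x₂` splits the form of `A` into the two
blocks of (i). Otherwise some `w ∈ ker A₁₁` has `z = A₂₁ w ≠ 0`; then `(w, 0, 0)` is isotropic for
`A` and `A (w, 0, 0) = (0, z, 0)`, so adjoining it as a new first coordinate borders `A` by `z`.
-/

open Matrix

namespace Matrix

theorem exists_mul_eq_of_ker_le {K l m n : Type*} [Field K] [Fintype m] [Fintype n]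
    [DecidableEq n] {A : Matrix m n K} {B : Matrix l n K}
    (h : ∀ w, A *ᵥ w = 0 → B *ᵥ w = 0) : ∃ X : Matrix l m K, X * A = B := by
  have hrow (i : l) : ∃ c : m → K,
      ∑ j, c j • (LinearMap.proj j ∘ₗ A.mulVecLin) = LinearMap.proj i ∘ₗ B.mulVecLin := by
    refine (Submodule.mem_span_range_iff_exists_fun K).1 (mem_span_of_iInf_ker_le_ker ?_)
    intro w hw
    rw [← LinearMap.ker_pi, LinearMap.mem_ker] at hw
    exact congrFun (h w hw) i
  choose X hX using hrow
  refine ⟨of X, ext fun i j => ?_⟩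
  simpa [mul_apply, mulVec_single_one] using LinearMap.congr_fun (hX i) (Pi.single j 1)

variable {R : Type*} [CommRing R]

/-- The paper's `X → Y`; `P` need not be square. -/
def CongrTo {n p : Type*} [Fintype n] (X : Matrix n n R) (Y : Matrix p p R) : Prop :=
  ∃ P : Matrix n p R, Pᵀ * X * P = Y

section Bordering

variable {n ι : Type*} [Fintype n] [DecidableEq n]

theorem fromBlocks_congrTo_lowerRight [Fintype ι] (B₁₁ : Matrix ι ι R) (B₁₂ : Matrix ι n R)
    (B₂₁ : Matrix n ι R) (B₂₂ : Matrix n n R) : CongrTo (fromBlocks B₁₁ B₁₂ B₂₁ B₂₂) B₂₂ :=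
  ⟨fromRows 0 1, by simp [transpose_fromRows, fromCols_mul_fromBlocks, fromCols_mul_fromRows]⟩

theorem congrTo_fromBlocks_of_mul_eq {X : Matrix n n R} (hX : X.IsSymm) {C Z : Matrix n ι R}
    (hXC : X * C = Z) (hZC : Zᵀ * C = 0) : CongrTo X (fromBlocks 0 Zᵀ Z X) := by
  refine ⟨fromCols C 1, ?_⟩
  have hCX : Cᵀ * X = Zᵀ := by rw [← hXC, transpose_mul, hX.eq]
  rw [transpose_fromCols, transpose_one, fromRows_mul, fromRows_mul, Matrix.one_mul, mul_fromCols,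
    mul_fromCols, Matrix.mul_one, Matrix.mul_one, fromRows_fromCols_eq_fromBlocks, hCX, hXC, hZC]

end Bordering

section BlockTridiag

variable {k m r : Type*}

def blockTridiag (A₁₁ : Matrix k k R) (A₁₂ : Matrix k m R) (A₂₁ : Matrix m k R)
    (A₂₂ : Matrix m m R) (A₂₃ : Matrix m r R) (A₃₂ : Matrix r m R) (A₃₃ : Matrix r r R) :
    Matrix (k ⊕ (m ⊕ r)) (k ⊕ (m ⊕ r)) R :=
  fromBlocks A₁₁ (fromCols A₁₂ 0) (fromRows A₂₁ 0) (fromBlocks A₂₂ A₂₃ A₃₂ A₃₃)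

variable (A₁₁ : Matrix k k R) (A₁₂ : Matrix k m R) (A₂₁ : Matrix m k R)
  (A₂₂ : Matrix m m R) (A₂₃ : Matrix m r R) (A₃₂ : Matrix r m R) (A₃₃ : Matrix r r R)

theorem isSymm_blockTridiag (h11 : A₁₁.IsSymm) (h22 : A₂₂.IsSymm) (h33 : A₃₃.IsSymm)
    (h21 : A₂₁ = A₁₂ᵀ) (h32 : A₃₂ = A₂₃ᵀ) : (blockTridiag A₁₁ A₁₂ A₂₁ A₂₂ A₂₃ A₃₂ A₃₃).IsSymm := by
  subst h21 h32
  simp [IsSymm, blockTridiag, fromBlocks_transpose, transpose_fromCols, transpose_fromRows,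
    h11.eq, h22.eq, h33.eq]

variable [Fintype k] [Fintype m] [Fintype r] {A₁₁ A₁₂ A₂₁}

theorem blockTridiag_mul_fromRows_replicateCol (ι : Type*) {w : k → R} (hw : A₁₁ *ᵥ w = 0) :
    blockTridiag A₁₁ A₁₂ A₂₁ A₂₂ A₂₃ A₃₂ A₃₃ *
        fromRows (replicateCol ι w) (0 : Matrix (m ⊕ r) ι R) =
      fromRows 0 (fromRows (replicateCol ι (A₂₁ *ᵥ w)) 0) := by
  simp only [blockTridiag, fromBlocks_mul_fromRows, ← replicateCol_mulVec, hw]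
  ext (i | i | i) j <;> simp

variable [DecidableEq k] [DecidableEq m] [DecidableEq r]

theorem blockTridiag_congrTo_bordered (ι : Type*)
    (hsymm : (blockTridiag A₁₁ A₁₂ A₂₁ A₂₂ A₂₃ A₃₂ A₃₃).IsSymm) {w : k → R} (hw : A₁₁ *ᵥ w = 0) :
    CongrTo (blockTridiag A₁₁ A₁₂ A₂₁ A₂₂ A₂₃ A₃₂ A₃₃)
      (fromBlocks 0 (fromCols 0 (fromCols (replicateRow ι (A₂₁ *ᵥ w)) 0))
        (fromRows 0 (fromRows (replicateCol ι (A₂₁ *ᵥ w)) 0))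
        (blockTridiag A₁₁ A₁₂ A₂₁ A₂₂ A₂₃ A₃₂ A₃₃)) := by
  convert congrTo_fromBlocks_of_mul_eq hsymm
    (blockTridiag_mul_fromRows_replicateCol A₂₂ A₂₃ A₃₂ A₃₃ ι hw) ?_ using 2
  · simp [transpose_fromRows]
  · simp [transpose_fromRows, fromCols_mul_fromRows]

variable {Y : Matrix k m R}

theorem blockTridiag_congrTo_fromBlocks_zero_zero (hY : A₁₁ * Y = A₁₂)
    (hY' : Yᵀ * A₁₁ = A₂₁) :
    CongrTo (blockTridiag A₁₁ A₁₂ A₂₁ A₂₂ A₂₃ A₃₂ A₃₃)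
      (fromBlocks (fromBlocks A₁₁ A₁₂ A₂₁ (Yᵀ * A₁₁ * Y)) 0 0
        (fromBlocks (A₂₂ - Yᵀ * A₁₁ * Y) A₂₃ A₃₂ A₃₃)) := by
  have hYY : Yᵀ * A₁₂ = A₂₁ * Y := by rw [← hY, ← Matrix.mul_assoc, hY']
  refine ⟨fromBlocks (fromCols 1 Y) (fromCols (-Y) 0) 0 1, ?_⟩
  simp only [blockTridiag, fromBlocks_transpose, transpose_fromCols, transpose_one, transpose_zero,
    transpose_neg, fromBlocks_multiply, fromRows_mul, mul_fromCols, Matrix.mul_one, Matrix.one_mul,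
    Matrix.mul_zero, Matrix.zero_mul, add_zero, Matrix.neg_mul, Matrix.mul_neg, hY, hY', hYY]
  have hcancel : (-A₂₁).fromRows (0 : Matrix r k R) + A₂₁.fromRows 0 = 0 := by
    ext (i | i) j <;> simp
  rw [hcancel]
  ext ((i | i) | (i | i)) ((j | j) | (j | j)) <;> simp [neg_add_eq_sub]

theorem fromBlocks_zero_zero_congrTo_blockTridiag (hY : A₁₁ * Y = A₁₂)
    (hY' : Yᵀ * A₁₁ = A₂₁) :
    CongrTo (fromBlocks (fromBlocks A₁₁ A₁₂ A₂₁ (Yᵀ * A₁₁ * Y)) 0 0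
        (fromBlocks (A₂₂ - Yᵀ * A₁₁ * Y) A₂₃ A₃₂ A₃₃))
      (blockTridiag A₁₁ A₁₂ A₂₁ A₂₂ A₂₃ A₃₂ A₃₃) := by
  have hYY : Yᵀ * A₁₂ = A₂₁ * Y := by rw [← hY, ← Matrix.mul_assoc, hY']
  refine ⟨fromBlocks (fromRows 1 0) (fromRows (fromCols Y 0) 0) 0 1, ?_⟩
  simp only [blockTridiag, fromBlocks_transpose, transpose_fromRows, transpose_fromCols,
    transpose_one, transpose_zero, fromBlocks_multiply, fromRows_mul, mul_fromCols,
    fromCols_mul_fromBlocks, fromCols_mul_fromRows, Matrix.mul_one, Matrix.one_mul,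
    Matrix.mul_zero, Matrix.zero_mul, add_zero, zero_add, hY, hY', hYY]
  ext (i | i | i) (j | j | j) <;> simp

end BlockTridiag

end Matrix

/-- For a symmetric matrix `A = [[A₁₁, A₁₂, 0],[A₂₁, A₂₂, A₂₃],[0, A₃₂, A₃₃]]`
(`A₁₁` of size `k×k`, `A₂₂` of size `m×m`), either (i) there is a `k×m` matrix `Y` with
`A ↔ [[A₁₁, A₁₂],[A₂₁, Yᵀ A₁₁ Y]] ⊕ [[A₂₂ − Yᵀ A₁₁ Y, A₂₃],[A₃₂, A₃₃]]`, or (ii) there is a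
nonzero `z ∈ ℝᵐ` with `A ↔ [[0,0,zᵀ,0],[0,A₁₁,A₁₂,0],[z,A₂₁,A₂₂,A₂₃],[0,0,A₃₂,A₃₃]]`. -/
theorem stmt7 {k m r : ℕ}
    (A₁₁ : Matrix (Fin k) (Fin k) ℝ) (A₁₂ : Matrix (Fin k) (Fin m) ℝ)
    (A₂₁ : Matrix (Fin m) (Fin k) ℝ) (A₂₂ : Matrix (Fin m) (Fin m) ℝ)
    (A₂₃ : Matrix (Fin m) (Fin r) ℝ) (A₃₂ : Matrix (Fin r) (Fin m) ℝ)
    (A₃₃ : Matrix (Fin r) (Fin r) ℝ)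
    (h11 : A₁₁ᵀ = A₁₁) (h22 : A₂₂ᵀ = A₂₂) (h33 : A₃₃ᵀ = A₃₃)
    (h21 : A₂₁ = A₁₂ᵀ) (h32 : A₃₂ = A₂₃ᵀ) :
    (∃ Y : Matrix (Fin k) (Fin m) ℝ,
      (∃ P : Matrix (Fin k ⊕ (Fin m ⊕ Fin r)) ((Fin k ⊕ Fin m) ⊕ (Fin m ⊕ Fin r)) ℝ,
          Pᵀ * (fromBlocks A₁₁ (fromCols A₁₂ 0) (fromRows A₂₁ 0)
                  (fromBlocks A₂₂ A₂₃ A₃₂ A₃₃)) * P =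
            fromBlocks (fromBlocks A₁₁ A₁₂ A₂₁ (Yᵀ * A₁₁ * Y)) 0 0
              (fromBlocks (A₂₂ - Yᵀ * A₁₁ * Y) A₂₃ A₃₂ A₃₃)) ∧
      (∃ Q : Matrix ((Fin k ⊕ Fin m) ⊕ (Fin m ⊕ Fin r)) (Fin k ⊕ (Fin m ⊕ Fin r)) ℝ,
          Qᵀ * (fromBlocks (fromBlocks A₁₁ A₁₂ A₂₁ (Yᵀ * A₁₁ * Y)) 0 0
                  (fromBlocks (A₂₂ - Yᵀ * A₁₁ * Y) A₂₃ A₃₂ A₃₃)) * Q =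
            fromBlocks A₁₁ (fromCols A₁₂ 0) (fromRows A₂₁ 0)
              (fromBlocks A₂₂ A₂₃ A₃₂ A₃₃))) ∨
    (∃ z : Fin m → ℝ, z ≠ 0 ∧
      (∃ P : Matrix (Fin k ⊕ (Fin m ⊕ Fin r)) (Fin 1 ⊕ (Fin k ⊕ (Fin m ⊕ Fin r))) ℝ,
          Pᵀ * (fromBlocks A₁₁ (fromCols A₁₂ 0) (fromRows A₂₁ 0)
                  (fromBlocks A₂₂ A₂₃ A₃₂ A₃₃)) * P =
            fromBlocks 0
              (fromCols 0 (fromCols (Matrix.of fun (_ : Fin 1) j => z j) 0))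
              (fromRows 0 (fromRows (Matrix.of fun j (_ : Fin 1) => z j) 0))
              (fromBlocks A₁₁ (fromCols A₁₂ 0) (fromRows A₂₁ 0)
                (fromBlocks A₂₂ A₂₃ A₃₂ A₃₃))) ∧
      (∃ Q : Matrix (Fin 1 ⊕ (Fin k ⊕ (Fin m ⊕ Fin r))) (Fin k ⊕ (Fin m ⊕ Fin r)) ℝ,
          Qᵀ * (fromBlocks 0
              (fromCols 0 (fromCols (Matrix.of fun (_ : Fin 1) j => z j) 0))
              (fromRows 0 (fromRows (Matrix.of fun j (_ : Fin 1) => z j) 0))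
              (fromBlocks A₁₁ (fromCols A₁₂ 0) (fromRows A₂₁ 0)
                (fromBlocks A₂₂ A₂₃ A₃₂ A₃₃))) * Q =
            fromBlocks A₁₁ (fromCols A₁₂ 0) (fromRows A₂₁ 0)
              (fromBlocks A₂₂ A₂₃ A₃₂ A₃₃))) := by
  by_cases hker : ∀ w, A₁₁ *ᵥ w = 0 → A₂₁ *ᵥ w = 0
  · obtain ⟨X, hX⟩ := exists_mul_eq_of_ker_le hker
    have hY : A₁₁ * Xᵀ = A₁₂ := by rw [← h11, ← transpose_mul, hX, h21, transpose_transpose]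
    have hY' : Xᵀᵀ * A₁₁ = A₂₁ := by rwa [transpose_transpose]
    exact Or.inl ⟨Xᵀ, blockTridiag_congrTo_fromBlocks_zero_zero _ _ _ _ hY hY',
      fromBlocks_zero_zero_congrTo_blockTridiag _ _ _ _ hY hY'⟩
  · push Not at hker
    obtain ⟨w, hw, hz⟩ := hker
    have hsymm := isSymm_blockTridiag A₁₁ A₁₂ A₂₁ A₂₂ A₂₃ A₃₂ A₃₃ h11 h22 h33 h21 h32
    exact Or.inr ⟨A₂₁ *ᵥ w, hz, blockTridiag_congrTo_bordered _ _ _ _ (Fin 1) hsymm hw,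
      fromBlocks_congrTo_lowerRight _ _ _ _⟩
end

section
/- Let A = [[A₁₁, A₁₂, 0],[A₂₁, a₂₂, A₂₃],[0, A₃₂, A₃₃]] be a symmetric n×n real matrix, where A₁₁ is k×k, A₃₃ is (n−k−1)×(n−k−1), and a₂₂ is a scalar. Then at least one of the following holds: (i) there exists x ∈ ℝ^k such that A ↔ [[A₁₁, A₁₂],[A₂₁, xᵀ A₁₁ x]] ⊕ [[a₂₂ − xᵀ A₁₁ x, A₂₃],[A₃₂, A₃₃]]; or (ii) A ↔ A₁₁ ⊕ A₃₃ ⊕ H, where H = [[0,1],[1,0]]. -/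
/-!
For symmetric `X` and `Y`, `Pᵀ X P = Y` holds as soon as the substitution `v ↦ P v` carries the
quadratic form of `X` to that of `Y`, so each congruence is a change of variables. Write
`b`, `c`, `a` for `A₁₂`, `A₂₃`, `a₂₂`. If `b = A₁₁ x`, the substitution `u = y + (s - t) x` splits
the cut variable into a variable `s` on the side of `A₁₁` and a variable `t` on the side of `A₃₃`.
Otherwise, `A₁₁` being symmetric, some `u ∈ ker A₁₁` has `b ⬝ u = 1`; then `u` and the cut
variable corrected by `a / 2` span a hyperbolic plane orthogonal to copies of `A₁₁` and `A₃₃`.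
The substitutions in the opposite direction need no hypothesis.
-/

open Matrix

section Congruence

variable {K : Type*} [Field K] {m n : Type*} [Fintype m] [Fintype n]

/-- `X` represents `Y` as a quadratic form; this is the relation `X → Y`. -/
def Matrix.FormRepresents (X : Matrix m m K) (Y : Matrix n n K) : Prop :=
  ∃ P : Matrix m n K, Pᵀ * X * P = Y

theorem Matrix.IsSymm.eq_of_dotProduct_mulVec_self_eq [NeZero (2 : K)]
    {M N : Matrix n n K} (hM : M.IsSymm) (hN : N.IsSymm)
    (h : ∀ v, v ⬝ᵥ M *ᵥ v = v ⬝ᵥ N *ᵥ v) : M = N := by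
  classical
  have single_form : ∀ (X : Matrix n n K) i j, Pi.single i 1 ⬝ᵥ X *ᵥ Pi.single j 1 = X i j := by
    simp
  ext i j
  have hii := h (Pi.single i 1)
  have hjj := h (Pi.single j 1)
  have hij := h (Pi.single i 1 + Pi.single j 1)
  simp only [mulVec_add, dotProduct_add, add_dotProduct, single_form, hM.apply i j,
    hN.apply i j] at hii hjj hij
  apply mul_left_cancel₀ (two_ne_zero : (2 : K) ≠ 0)
  linear_combination hij - hii - hjj

theorem Matrix.FormRepresents.of_linearMap [NeZero (2 : K)] {X : Matrix m m K}
    {Y : Matrix n n K} (hX : X.IsSymm) (hY : Y.IsSymm) (f : (n → K) →ₗ[K] m → K)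
    (hf : ∀ v, f v ⬝ᵥ X *ᵥ f v = v ⬝ᵥ Y *ᵥ v) : X.FormRepresents Y := by
  classical
  refine ⟨LinearMap.toMatrix' f, IsSymm.eq_of_dotProduct_mulVec_self_eq ?_ hY fun v => ?_⟩
  · simp [IsSymm, transpose_mul, hX.eq, Matrix.mul_assoc]
  · rw [← hf, ← LinearMap.toMatrix'_mulVec, ← mulVec_mulVec, ← mulVec_mulVec, dotProduct_mulVec,
      vecMul_transpose]

theorem Matrix.IsSymm.exists_mulVec_eq_zero_dotProduct_eq_one {A : Matrix n n K}
    (hA : A.IsSymm) {b : n → K} (hb : ¬ ∃ x, A *ᵥ x = b) :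
    ∃ u, A *ᵥ u = 0 ∧ b ⬝ᵥ u = 1 := by
  classical
  obtain ⟨f, hfb, hf⟩ := Submodule.exists_dual_map_eq_bot_of_notMem
    (p := LinearMap.range A.mulVecLin) (x := b) (by simpa using hb) inferInstance
  set v : n → K := fun i => f (Pi.single i 1)
  have hf_eq : ∀ w, f w = v ⬝ᵥ w := by
    intro w
    rw [LinearMap.pi_apply_eq_sum_univ f w, dotProduct_comm]
    exact Finset.sum_congr rfl fun i _ => by
      congr 2; ext j; simp [Pi.single_apply, eq_comm]
  have hfA : ∀ w, f (A *ᵥ w) = 0 := fun w => by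
    have := Submodule.mem_map_of_mem (f := f) (LinearMap.mem_range_self A.mulVecLin w)
    rwa [hf, Submodule.mem_bot] at this
  have hvb : b ⬝ᵥ v ≠ 0 := by rwa [dotProduct_comm, ← hf_eq]
  refine ⟨(b ⬝ᵥ v)⁻¹ • v, ?_, by rw [dotProduct_smul, smul_eq_mul, inv_mul_cancel₀ hvb]⟩
  rw [mulVec_smul, smul_eq_zero_iff_right (inv_ne_zero hvb)]
  ext i
  have := hfA (Pi.single i 1)
  rw [hf_eq, dotProduct_mulVec, ← mulVec_transpose, hA.eq] at this
  simpa using this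

end Congruence

section BlockForms

variable {K : Type*} [CommSemiring K] {m o : Type*} [Fintype m] [Fintype o]

theorem Matrix.isSymm_of_subsingleton {n α : Type*} [Subsingleton n] (M : Matrix n n α) :
    M.IsSymm :=
  IsSymm.ext fun i j => by rw [Subsingleton.elim i j]

theorem forall_sumElim {α β γ : Type*} {P : (α ⊕ β → γ) → Prop} :
    (∀ v, P v) ↔ ∀ p q, P (Sum.elim p q) :=
  ⟨fun h _ _ => h _, fun h v => Sum.elim_comp_inl_inr v ▸ h _ _⟩

theorem sumElim_dotProduct_fromBlocks_mulVec_sumElim (A : Matrix m m K) (B : Matrix m o K)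
    (C : Matrix o m K) (D : Matrix o o K) (v : m → K) (w : o → K) :
    Sum.elim v w ⬝ᵥ fromBlocks A B C D *ᵥ Sum.elim v w =
      v ⬝ᵥ A *ᵥ v + v ⬝ᵥ B *ᵥ w + w ⬝ᵥ C *ᵥ v + w ⬝ᵥ D *ᵥ w := by
  simp only [fromBlocks_mulVec, Sum.elim_comp_inl, Sum.elim_comp_inr, sumElim_dotProduct_sumElim,
    dotProduct_add]
  ring

theorem dotProduct_replicateCol_mulVec (u b : m → K) (s : Fin 1 → K) :
    u ⬝ᵥ replicateCol (Fin 1) b *ᵥ s = s 0 * (b ⬝ᵥ u) := by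
  simp [mulVec, dotProduct, Finset.mul_sum, mul_comm, mul_assoc]

theorem dotProduct_replicateRow_mulVec (s : Fin 1 → K) (b u : m → K) :
    s ⬝ᵥ replicateRow (Fin 1) b *ᵥ u = s 0 * (b ⬝ᵥ u) := by
  simp [replicateRow_mulVec_eq_const, dotProduct]

end BlockForms

section CutVertex

variable {K : Type*} [Field K] {m o : Type*}
  (A₁₁ : Matrix m m K) (b : m → K) (a : K) (c : o → K) (A₃₃ : Matrix o o K)

def cutVertexMatrix : Matrix (m ⊕ (Fin 1 ⊕ o)) (m ⊕ (Fin 1 ⊕ o)) K :=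
  fromBlocks A₁₁ (fromCols (replicateCol (Fin 1) b) 0) (fromRows (replicateCol (Fin 1) b)ᵀ 0)
    (fromBlocks !![a] (replicateRow (Fin 1) c) (replicateRow (Fin 1) c)ᵀ A₃₃)

def cutVertexSplitMatrix [Fintype m] (x : m → K) :
    Matrix ((m ⊕ Fin 1) ⊕ (Fin 1 ⊕ o)) ((m ⊕ Fin 1) ⊕ (Fin 1 ⊕ o)) K :=
  fromBlocks
    (fromBlocks A₁₁ (replicateCol (Fin 1) b) (replicateCol (Fin 1) b)ᵀ !![x ⬝ᵥ A₁₁ *ᵥ x]) 0 0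
    (fromBlocks !![a - x ⬝ᵥ A₁₁ *ᵥ x] (replicateRow (Fin 1) c) (replicateRow (Fin 1) c)ᵀ A₃₃)

def hyperbolicSum : Matrix ((m ⊕ o) ⊕ Fin 2) ((m ⊕ o) ⊕ Fin 2) K :=
  fromBlocks (fromBlocks A₁₁ 0 0 A₃₃) 0 0 !![0, 1; 1, 0]

variable {A₁₁ b a c A₃₃}

theorem isSymm_cutVertexMatrix (h₁₁ : A₁₁.IsSymm) (h₃₃ : A₃₃.IsSymm) :
    (cutVertexMatrix A₁₁ b a c A₃₃).IsSymm :=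
  h₁₁.fromBlocks (by simp [transpose_fromCols]) ((isSymm_of_subsingleton _).fromBlocks rfl h₃₃)

theorem isSymm_cutVertexSplitMatrix [Fintype m] (h₁₁ : A₁₁.IsSymm) (h₃₃ : A₃₃.IsSymm)
    (x : m → K) : (cutVertexSplitMatrix A₁₁ b a c A₃₃ x).IsSymm :=
  (h₁₁.fromBlocks rfl (isSymm_of_subsingleton _)).fromBlocks transpose_zero
    ((isSymm_of_subsingleton _).fromBlocks rfl h₃₃)

theorem isSymm_hyperbolicSum (h₁₁ : A₁₁.IsSymm) (h₃₃ : A₃₃.IsSymm) :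
    (hyperbolicSum A₁₁ A₃₃).IsSymm :=
  (h₁₁.fromBlocks transpose_zero h₃₃).fromBlocks transpose_zero
    (by ext i j; fin_cases i <;> fin_cases j <;> rfl)

variable [Fintype m] [Fintype o]

theorem dotProduct_cutVertexMatrix_mulVec (u : m → K) (s : Fin 1 → K) (w : o → K) :
    Sum.elim u (Sum.elim s w) ⬝ᵥ cutVertexMatrix A₁₁ b a c A₃₃ *ᵥ Sum.elim u (Sum.elim s w) =
      u ⬝ᵥ A₁₁ *ᵥ u + 2 * s 0 * (b ⬝ᵥ u) + a * s 0 ^ 2 + 2 * s 0 * (c ⬝ᵥ w)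
        + w ⬝ᵥ A₃₃ *ᵥ w := by
  simp [cutVertexMatrix, sumElim_dotProduct_fromBlocks_mulVec_sumElim, fromRows_mulVec,
    sumElim_dotProduct_sumElim, dotProduct_replicateCol_mulVec, dotProduct_replicateRow_mulVec,
    vecHead, vecTail]
  ring

theorem dotProduct_cutVertexSplitMatrix_mulVec (x u : m → K) (s t : Fin 1 → K) (w : o → K) :
    Sum.elim (Sum.elim u s) (Sum.elim t w) ⬝ᵥ cutVertexSplitMatrix A₁₁ b a c A₃₃ x *ᵥ
        Sum.elim (Sum.elim u s) (Sum.elim t w) =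
      u ⬝ᵥ A₁₁ *ᵥ u + 2 * s 0 * (b ⬝ᵥ u) + (x ⬝ᵥ A₁₁ *ᵥ x) * s 0 ^ 2
        + (a - x ⬝ᵥ A₁₁ *ᵥ x) * t 0 ^ 2 + 2 * t 0 * (c ⬝ᵥ w) + w ⬝ᵥ A₃₃ *ᵥ w := by
  simp [cutVertexSplitMatrix, sumElim_dotProduct_fromBlocks_mulVec_sumElim,
    dotProduct_replicateCol_mulVec, dotProduct_replicateRow_mulVec, vecHead, vecTail]
  ring

theorem dotProduct_hyperbolicSum_mulVec (u : m → K) (w : o → K) (p : Fin 2 → K) :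
    Sum.elim (Sum.elim u w) p ⬝ᵥ hyperbolicSum A₁₁ A₃₃ *ᵥ Sum.elim (Sum.elim u w) p =
      u ⬝ᵥ A₁₁ *ᵥ u + w ⬝ᵥ A₃₃ *ᵥ w + 2 * p 0 * p 1 := by
  simp [hyperbolicSum, sumElim_dotProduct_fromBlocks_mulVec_sumElim, vecHead, vecTail]
  ring

variable [NeZero (2 : K)]

theorem cutVertexMatrix_formRepresents_cutVertexSplitMatrix (h₁₁ : A₁₁.IsSymm) (h₃₃ : A₃₃.IsSymm)
    {x : m → K} (hx : A₁₁ *ᵥ x = b) :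
    (cutVertexMatrix A₁₁ b a c A₃₃).FormRepresents (cutVertexSplitMatrix A₁₁ b a c A₃₃ x) := by
  let f : ((m ⊕ Fin 1) ⊕ (Fin 1 ⊕ o) → K) →ₗ[K] (m ⊕ (Fin 1 ⊕ o) → K) :=
    { toFun := fun v => Sum.elim
          (v ∘ Sum.inl ∘ Sum.inl + (v (.inl (.inr 0)) - v (.inr (.inl 0))) • x) (v ∘ Sum.inr)
      map_add' := by intro v w; ext (i | i) <;> simp; ring
      map_smul' := by intro r v; ext (i | i) <;> simp; ring }
  have hxA : ∀ y, x ⬝ᵥ A₁₁ *ᵥ y = b ⬝ᵥ y := fun y => by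
    rw [dotProduct_mulVec, ← mulVec_transpose, h₁₁.eq, hx]
  refine .of_linearMap (isSymm_cutVertexMatrix h₁₁ h₃₃) (isSymm_cutVertexSplitMatrix h₁₁ h₃₃ x)
    f ?_
  simp only [forall_sumElim]
  intro y s t z
  have hf : f (Sum.elim (Sum.elim y s) (Sum.elim t z)) =
      Sum.elim (y + (s 0 - t 0) • x) (Sum.elim t z) := by
    simp [f, ← Function.comp_assoc]
  rw [hf, dotProduct_cutVertexMatrix_mulVec, dotProduct_cutVertexSplitMatrix_mulVec]
  simp [mulVec_add, mulVec_smul, hx, hxA, dotProduct_comm _ b]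
  ring

theorem cutVertexSplitMatrix_formRepresents_cutVertexMatrix (h₁₁ : A₁₁.IsSymm)
    (h₃₃ : A₃₃.IsSymm) (x : m → K) :
    (cutVertexSplitMatrix A₁₁ b a c A₃₃ x).FormRepresents (cutVertexMatrix A₁₁ b a c A₃₃) := by
  let f : (m ⊕ (Fin 1 ⊕ o) → K) →ₗ[K] ((m ⊕ Fin 1) ⊕ (Fin 1 ⊕ o) → K) :=
    { toFun := fun v => Sum.elim (Sum.elim (v ∘ Sum.inl) (v ∘ Sum.inr ∘ Sum.inl)) (v ∘ Sum.inr)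
      map_add' := by intro v w; ext ((i | i) | i) <;> simp
      map_smul' := by intro r v; ext ((i | i) | i) <;> simp }
  refine .of_linearMap (isSymm_cutVertexSplitMatrix h₁₁ h₃₃ x) (isSymm_cutVertexMatrix h₁₁ h₃₃)
    f ?_
  simp only [forall_sumElim]
  intro y s z
  have hf : f (Sum.elim y (Sum.elim s z)) = Sum.elim (Sum.elim y s) (Sum.elim s z) := by
    simp [f, ← Function.comp_assoc]
  rw [hf, dotProduct_cutVertexMatrix_mulVec, dotProduct_cutVertexSplitMatrix_mulVec]
  ring

theorem cutVertexMatrix_formRepresents_hyperbolicSum (h₁₁ : A₁₁.IsSymm) (h₃₃ : A₃₃.IsSymm)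
    {u : m → K} (hu : A₁₁ *ᵥ u = 0) (hbu : b ⬝ᵥ u = 1) :
    (cutVertexMatrix A₁₁ b a c A₃₃).FormRepresents (hyperbolicSum A₁₁ A₃₃) := by
  let f : ((m ⊕ o) ⊕ Fin 2 → K) →ₗ[K] (m ⊕ (Fin 1 ⊕ o) → K) :=
    { toFun := fun v => Sum.elim
          (v ∘ Sum.inl ∘ Sum.inl + (v (.inr 0) - b ⬝ᵥ v ∘ Sum.inl ∘ Sum.inl
            - c ⬝ᵥ v ∘ Sum.inl ∘ Sum.inr - a / 2 * v (.inr 1)) • u)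
          (Sum.elim (fun _ => v (.inr 1)) (v ∘ Sum.inl ∘ Sum.inr))
      map_add' := by
        intro v w; ext (i | i | i) <;> simp [Pi.add_comp, dotProduct_add]; ring
      map_smul' := by
        intro r v; ext (i | i | i) <;> simp [Pi.smul_comp, dotProduct_smul]; ring }
  have huA : ∀ y, u ⬝ᵥ A₁₁ *ᵥ y = 0 := fun y => by
    rw [dotProduct_mulVec, ← mulVec_transpose, h₁₁.eq, hu, zero_dotProduct]
  refine .of_linearMap (isSymm_cutVertexMatrix h₁₁ h₃₃) (isSymm_hyperbolicSum h₁₁ h₃₃) f ?_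
  simp only [forall_sumElim]
  intro y z p
  have hf : f (Sum.elim (Sum.elim y z) p) =
      Sum.elim (y + (p 0 - b ⬝ᵥ y - c ⬝ᵥ z - a / 2 * p 1) • u) (Sum.elim (fun _ => p 1) z) := by
    simp [f, ← Function.comp_assoc]
  rw [hf, dotProduct_cutVertexMatrix_mulVec, dotProduct_hyperbolicSum_mulVec]
  simp [mulVec_add, mulVec_smul, hu, huA, hbu]
  field_simp
  ring

theorem hyperbolicSum_formRepresents_cutVertexMatrix (h₁₁ : A₁₁.IsSymm) (h₃₃ : A₃₃.IsSymm) :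
    (hyperbolicSum A₁₁ A₃₃).FormRepresents (cutVertexMatrix A₁₁ b a c A₃₃) := by
  let f : (m ⊕ (Fin 1 ⊕ o) → K) →ₗ[K] ((m ⊕ o) ⊕ Fin 2 → K) :=
    { toFun := fun v => Sum.elim (Sum.elim (v ∘ Sum.inl) (v ∘ Sum.inr ∘ Sum.inr))
          ![b ⬝ᵥ v ∘ Sum.inl + a / 2 * v (.inr (.inl 0)) + c ⬝ᵥ v ∘ Sum.inr ∘ Sum.inr,
            v (.inr (.inl 0))]
      map_add' := by
        intro v w
        ext ((i | i) | i) <;> try fin_cases i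
        all_goals simp [Pi.add_comp, dotProduct_add]
        ring
      map_smul' := by
        intro r v
        ext ((i | i) | i) <;> try fin_cases i
        all_goals simp [Pi.smul_comp, dotProduct_smul]
        ring }
  refine .of_linearMap (isSymm_hyperbolicSum h₁₁ h₃₃) (isSymm_cutVertexMatrix h₁₁ h₃₃) f ?_
  simp only [forall_sumElim]
  intro y s z
  have hf : f (Sum.elim y (Sum.elim s z)) =
      Sum.elim (Sum.elim y z) ![b ⬝ᵥ y + a / 2 * s 0 + c ⬝ᵥ z, s 0] := by
    simp [f, ← Function.comp_assoc]
  rw [hf, dotProduct_cutVertexMatrix_mulVec, dotProduct_hyperbolicSum_mulVec]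
  simp
  field_simp
  ring

theorem cutVertexMatrix_split_or_hyperbolic (h₁₁ : A₁₁.IsSymm) (h₃₃ : A₃₃.IsSymm) :
    (∃ x, (cutVertexMatrix A₁₁ b a c A₃₃).FormRepresents (cutVertexSplitMatrix A₁₁ b a c A₃₃ x) ∧
        (cutVertexSplitMatrix A₁₁ b a c A₃₃ x).FormRepresents (cutVertexMatrix A₁₁ b a c A₃₃)) ∨
      ((cutVertexMatrix A₁₁ b a c A₃₃).FormRepresents (hyperbolicSum A₁₁ A₃₃) ∧
        (hyperbolicSum A₁₁ A₃₃).FormRepresents (cutVertexMatrix A₁₁ b a c A₃₃)) := by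
  by_cases hb : ∃ x, A₁₁ *ᵥ x = b
  · obtain ⟨x, hx⟩ := hb
    exact .inl ⟨x, cutVertexMatrix_formRepresents_cutVertexSplitMatrix h₁₁ h₃₃ hx,
      cutVertexSplitMatrix_formRepresents_cutVertexMatrix h₁₁ h₃₃ x⟩
  · obtain ⟨u, hu, hbu⟩ := h₁₁.exists_mulVec_eq_zero_dotProduct_eq_one hb
    exact .inr ⟨cutVertexMatrix_formRepresents_hyperbolicSum h₁₁ h₃₃ hu hbu,
      hyperbolicSum_formRepresents_cutVertexMatrix h₁₁ h₃₃⟩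

end CutVertex

/-- For a symmetric matrix `A = [[A₁₁, A₁₂, 0],[A₂₁, a₂₂, A₂₃],[0, A₃₂, A₃₃]]`
with scalar middle entry `a₂₂`, either (i) there is `x ∈ ℝᵏ` with
`A ↔ [[A₁₁, A₁₂],[A₂₁, xᵀ A₁₁ x]] ⊕ [[a₂₂ − xᵀ A₁₁ x, A₂₃],[A₃₂, A₃₃]]`, or
(ii) `A ↔ A₁₁ ⊕ A₃₃ ⊕ H` with `H = [[0,1],[1,0]]`. -/
theorem stmt8 {k r : ℕ}
    (A₁₁ : Matrix (Fin k) (Fin k) ℝ) (A₁₂ : Matrix (Fin k) (Fin 1) ℝ)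
    (A₂₁ : Matrix (Fin 1) (Fin k) ℝ) (a₂₂ : ℝ)
    (A₂₃ : Matrix (Fin 1) (Fin r) ℝ) (A₃₂ : Matrix (Fin r) (Fin 1) ℝ)
    (A₃₃ : Matrix (Fin r) (Fin r) ℝ)
    (h11 : A₁₁ᵀ = A₁₁) (h33 : A₃₃ᵀ = A₃₃)
    (h21 : A₂₁ = A₁₂ᵀ) (h32 : A₃₂ = A₂₃ᵀ) :
    (∃ x : Fin k → ℝ,
      (∃ P : Matrix (Fin k ⊕ (Fin 1 ⊕ Fin r)) ((Fin k ⊕ Fin 1) ⊕ (Fin 1 ⊕ Fin r)) ℝ,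
          Pᵀ * (fromBlocks A₁₁ (fromCols A₁₂ 0) (fromRows A₂₁ 0)
                  (fromBlocks (!![a₂₂]) A₂₃ A₃₂ A₃₃)) * P =
            fromBlocks (fromBlocks A₁₁ A₁₂ A₂₁ (!![x ⬝ᵥ A₁₁.mulVec x])) 0 0
              (fromBlocks (!![a₂₂ - x ⬝ᵥ A₁₁.mulVec x]) A₂₃ A₃₂ A₃₃)) ∧
      (∃ Q : Matrix ((Fin k ⊕ Fin 1) ⊕ (Fin 1 ⊕ Fin r)) (Fin k ⊕ (Fin 1 ⊕ Fin r)) ℝ,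
          Qᵀ * (fromBlocks (fromBlocks A₁₁ A₁₂ A₂₁ (!![x ⬝ᵥ A₁₁.mulVec x])) 0 0
                  (fromBlocks (!![a₂₂ - x ⬝ᵥ A₁₁.mulVec x]) A₂₃ A₃₂ A₃₃)) * Q =
            fromBlocks A₁₁ (fromCols A₁₂ 0) (fromRows A₂₁ 0)
              (fromBlocks (!![a₂₂]) A₂₃ A₃₂ A₃₃))) ∨
    ((∃ P : Matrix (Fin k ⊕ (Fin 1 ⊕ Fin r)) ((Fin k ⊕ Fin r) ⊕ Fin 2) ℝ,
          Pᵀ * (fromBlocks A₁₁ (fromCols A₁₂ 0) (fromRows A₂₁ 0)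
                  (fromBlocks (!![a₂₂]) A₂₃ A₃₂ A₃₃)) * P =
            fromBlocks (fromBlocks A₁₁ 0 0 A₃₃) 0 0 (!![0, 1; 1, 0])) ∧
      (∃ Q : Matrix ((Fin k ⊕ Fin r) ⊕ Fin 2) (Fin k ⊕ (Fin 1 ⊕ Fin r)) ℝ,
          Qᵀ * (fromBlocks (fromBlocks A₁₁ 0 0 A₃₃) 0 0 (!![0, 1; 1, 0])) * Q =
            fromBlocks A₁₁ (fromCols A₁₂ 0) (fromRows A₂₁ 0)
              (fromBlocks (!![a₂₂]) A₂₃ A₃₂ A₃₃))) := by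
  obtain ⟨b, rfl⟩ : ∃ b, A₁₂ = replicateCol (Fin 1) b :=
    ⟨fun i => A₁₂ i 0, by ext i j; fin_cases j; rfl⟩
  obtain ⟨c, rfl⟩ : ∃ c, A₂₃ = replicateRow (Fin 1) c :=
    ⟨A₂₃ 0, by ext i j; fin_cases i; rfl⟩
  subst h21 h32
  exact cutVertexMatrix_split_or_hyperbolic h11 h33
end

section
/- Let (G,Σ) be a signed graph with a 1-separation [(G₁,Σ₁),(G₂,Σ₂)] with cut vertex v. Let C ∈ S(G₁,Σ₁)_E and D ∈ S(G₂,Σ₂)_O with diagonal entries c_{vv} < 0 and d_{vv} > 0 at v. Then there exists a scalar α > 0 such that αC ⊕₁ D ∈ S(G,Σ). -/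
/- Scaling `C` by `α > 0` keeps the sign of every entry, and the blocks of `α C ⊕₁ D` away from
the cut vertex are entries of `α C`, entries of `D`, or zeros between the two sides, where the
separation allows no edge. The only entry that mixes the two matrices is `α c_vv + d_vv`; since
`c_vv < 0 < d_vv`, it sweeps `(-∞, d_vv)` as `α` ranges over `(0, ∞)`, so `α` can be chosen to give
it whatever sign the loops of `G` at `v` demand. -/

open Matrix

structure SignedGraph (V : Type*) where
  odd : V → V → Prop
  even : V → V → Prop
  odd_symm : ∀ i j, odd i j → odd j i
  even_symm : ∀ i j, even i j → even j i

def SignedGraph.matSet {V : Type*} [Fintype V] (G : SignedGraph V) : Set (Matrix V V ℝ) :=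
  {A | Aᵀ = A ∧ ∀ i j, (0 < A i j → G.odd i j) ∧ (A i j < 0 → G.even i j) ∧
    (A i j = 0 → (G.odd i j ∧ G.even i j) ∨ (¬ G.odd i j ∧ ¬ G.even i j))}

/-- Add an even loop at the vertex `v`. -/
def SignedGraph.addEvenLoop {V : Type*} (G : SignedGraph V) (v : V) : SignedGraph V where
  odd := G.odd
  even := fun i j => G.even i j ∨ (i = v ∧ j = v)
  odd_symm := G.odd_symm
  even_symm := fun i j h => h.elim (fun h' => Or.inl (G.even_symm i j h'))
    (fun h' => Or.inr ⟨h'.2, h'.1⟩)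

/-- Add an odd loop at the vertex `v`. -/
def SignedGraph.addOddLoop {V : Type*} (G : SignedGraph V) (v : V) : SignedGraph V where
  odd := fun i j => G.odd i j ∨ (i = v ∧ j = v)
  even := G.even
  odd_symm := fun i j h => h.elim (fun h' => Or.inl (G.odd_symm i j h'))
    (fun h' => Or.inr ⟨h'.2, h'.1⟩)
  even_symm := G.even_symm

def emb₁ {k r : ℕ} : Fin k ⊕ Fin 1 → Fin k ⊕ (Fin 1 ⊕ Fin r) :=
  Sum.elim Sum.inl (fun i => Sum.inr (Sum.inl i))

def emb₂ {k r : ℕ} : Fin 1 ⊕ Fin r → Fin k ⊕ (Fin 1 ⊕ Fin r) := Sum.inr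

def IsOneSeparation {k r : ℕ} (G : SignedGraph (Fin k ⊕ (Fin 1 ⊕ Fin r)))
    (G₁ : SignedGraph (Fin k ⊕ Fin 1)) (G₂ : SignedGraph (Fin 1 ⊕ Fin r)) : Prop :=
  (∀ u w, G.odd u w ↔
      ((∃ a b, emb₁ a = u ∧ emb₁ b = w ∧ G₁.odd a b) ∨
        (∃ a b, emb₂ a = u ∧ emb₂ b = w ∧ G₂.odd a b))) ∧
  (∀ u w, G.even u w ↔
      ((∃ a b, emb₁ a = u ∧ emb₁ b = w ∧ G₁.even a b) ∨
        (∃ a b, emb₂ a = u ∧ emb₂ b = w ∧ G₂.even a b)))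

def oneSubdirectSum {k r : ℕ} (B : Matrix (Fin k ⊕ Fin 1) (Fin k ⊕ Fin 1) ℝ)
    (D : Matrix (Fin 1 ⊕ Fin r) (Fin 1 ⊕ Fin r) ℝ) :
    Matrix (Fin k ⊕ (Fin 1 ⊕ Fin r)) (Fin k ⊕ (Fin 1 ⊕ Fin r)) ℝ :=
  fromBlocks B.toBlocks₁₁ (fromCols B.toBlocks₁₂ 0) (fromRows B.toBlocks₂₁ 0)
    (fromBlocks (B.toBlocks₂₂ + D.toBlocks₁₁) D.toBlocks₁₂ D.toBlocks₂₁ D.toBlocks₂₂)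

def SignAdmissible (odd even : Prop) (x : ℝ) : Prop :=
  (0 < x → odd) ∧ (x < 0 → even) ∧ (x = 0 → (odd ∧ even) ∨ (¬ odd ∧ ¬ even))

theorem SignedGraph.mem_matSet_iff {V : Type*} [Fintype V] {G : SignedGraph V}
    {A : Matrix V V ℝ} :
    A ∈ G.matSet ↔ Aᵀ = A ∧ ∀ i j, SignAdmissible (G.odd i j) (G.even i j) (A i j) :=
  Iff.rfl

namespace SignAdmissible

variable {odd even : Prop} {x : ℝ}

theorem of_pos (hodd : odd) (hx : 0 < x) : SignAdmissible odd even x :=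
  ⟨fun _ => hodd, fun h => absurd h hx.asymm, fun h => absurd h hx.ne'⟩

theorem of_neg (heven : even) (hx : x < 0) : SignAdmissible odd even x :=
  ⟨fun h => absurd h hx.asymm, fun _ => heven, fun h => absurd h hx.ne⟩

theorem zero (hodd : ¬ odd) (heven : ¬ even) : SignAdmissible odd even 0 :=
  ⟨fun h => absurd h (lt_irrefl 0), fun h => absurd h (lt_irrefl 0),
    fun _ => Or.inr ⟨hodd, heven⟩⟩

theorem pos_mul {α : ℝ} (hα : 0 < α) (h : SignAdmissible odd even x) :
    SignAdmissible odd even (α * x) := by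
  obtain ⟨hpos, hneg, hzero⟩ := h
  exact ⟨fun h => hpos ((mul_pos_iff_of_pos_left hα).1 h),
    fun h => hneg (neg_of_mul_neg_right h hα.le),
    fun h => hzero ((mul_eq_zero.1 h).resolve_left hα.ne')⟩

end SignAdmissible

theorem exists_pos_signAdmissible_mul_add (odd even : Prop) {c d : ℝ} (hc : c < 0)
    (hd : 0 < d) : ∃ α : ℝ, 0 < α ∧ SignAdmissible odd even (α * c + d) := by
  have hit : ∀ t : ℝ, t < 1 → ∃ α : ℝ, 0 < α ∧ α * c + d = t * d := fun t ht =>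
    ⟨(1 - t) * d / -c, div_pos (mul_pos (sub_pos.2 ht) hd) (neg_pos.2 hc),
      by field_simp [hc.ne]; ring⟩
  by_cases hodd : odd
  · obtain ⟨α, hα, h⟩ := hit (1 / 2) (by norm_num)
    exact ⟨α, hα, .of_pos hodd (by rw [h]; positivity)⟩
  by_cases heven : even
  · obtain ⟨α, hα, h⟩ := hit (-1) (by norm_num)
    exact ⟨α, hα, .of_neg heven (by rw [h]; linarith)⟩
  · obtain ⟨α, hα, h⟩ := hit 0 (by norm_num)
    exact ⟨α, hα, by rw [h, zero_mul]; exact .zero hodd heven⟩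

namespace SignedGraph

variable {V : Type*} [Fintype V] {G : SignedGraph V} {A : Matrix V V ℝ} {v i j : V}

theorem signAdmissible_of_mem_matSet_addEvenLoop (hA : A ∈ (G.addEvenLoop v).matSet)
    (hij : i ≠ v ∨ j ≠ v) : SignAdmissible (G.odd i j) (G.even i j) (A i j) := by
  have hloop : ¬ (i = v ∧ j = v) := by tauto
  simpa only [SignAdmissible, addEvenLoop, hloop, or_false] using hA.2 i j

theorem signAdmissible_of_mem_matSet_addOddLoop (hA : A ∈ (G.addOddLoop v).matSet)
    (hij : i ≠ v ∨ j ≠ v) : SignAdmissible (G.odd i j) (G.even i j) (A i j) := by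
  have hloop : ¬ (i = v ∧ j = v) := by tauto
  simpa only [SignAdmissible, addOddLoop, hloop, or_false] using hA.2 i j

end SignedGraph

def oneSumRel {k r : ℕ} (P₁ : Fin k ⊕ Fin 1 → Fin k ⊕ Fin 1 → Prop)
    (P₂ : Fin 1 ⊕ Fin r → Fin 1 ⊕ Fin r → Prop) (u w : Fin k ⊕ (Fin 1 ⊕ Fin r)) : Prop :=
  (∃ a b, emb₁ a = u ∧ emb₁ b = w ∧ P₁ a b) ∨ (∃ a b, emb₂ a = u ∧ emb₂ b = w ∧ P₂ a b)

namespace IsOneSeparation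

variable {k r : ℕ} {G : SignedGraph (Fin k ⊕ (Fin 1 ⊕ Fin r))}
  {G₁ : SignedGraph (Fin k ⊕ Fin 1)} {G₂ : SignedGraph (Fin 1 ⊕ Fin r)}

theorem odd_eq (h : IsOneSeparation G G₁ G₂) : G.odd = oneSumRel G₁.odd G₂.odd :=
  funext₂ fun u w => propext (h.1 u w)

theorem even_eq (h : IsOneSeparation G G₁ G₂) : G.even = oneSumRel G₁.even G₂.even :=
  funext₂ fun u w => propext (h.2 u w)

end IsOneSeparation

theorem oneSubdirectSum_transpose {k r : ℕ} (B : Matrix (Fin k ⊕ Fin 1) (Fin k ⊕ Fin 1) ℝ)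
    (D : Matrix (Fin 1 ⊕ Fin r) (Fin 1 ⊕ Fin r) ℝ) :
    (oneSubdirectSum B D)ᵀ = oneSubdirectSum Bᵀ Dᵀ := by
  ext (i | i | i) (j | j | j) <;> rfl

theorem signAdmissible_oneSubdirectSum {k r : ℕ} {B : Matrix (Fin k ⊕ Fin 1) (Fin k ⊕ Fin 1) ℝ}
    {D : Matrix (Fin 1 ⊕ Fin r) (Fin 1 ⊕ Fin r) ℝ} {P₁ Q₁ : Fin k ⊕ Fin 1 → Fin k ⊕ Fin 1 → Prop}
    {P₂ Q₂ : Fin 1 ⊕ Fin r → Fin 1 ⊕ Fin r → Prop}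
    (hB : ∀ a b, a ≠ Sum.inr 0 ∨ b ≠ Sum.inr 0 → SignAdmissible (P₁ a b) (Q₁ a b) (B a b))
    (hD : ∀ a b, a ≠ Sum.inl 0 ∨ b ≠ Sum.inl 0 → SignAdmissible (P₂ a b) (Q₂ a b) (D a b))
    (hv : SignAdmissible (P₁ (Sum.inr 0) (Sum.inr 0) ∨ P₂ (Sum.inl 0) (Sum.inl 0))
      (Q₁ (Sum.inr 0) (Sum.inr 0) ∨ Q₂ (Sum.inl 0) (Sum.inl 0))
      (B (Sum.inr 0) (Sum.inr 0) + D (Sum.inl 0) (Sum.inl 0)))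
    (u w : Fin k ⊕ (Fin 1 ⊕ Fin r)) :
    SignAdmissible (oneSumRel P₁ P₂ u w) (oneSumRel Q₁ Q₂ u w) (oneSubdirectSum B D u w) := by
  rcases u with i | i | i <;> rcases w with j | j | j <;>
    simp [oneSumRel, emb₁, emb₂, Sum.exists, Fin.fin_one_eq_zero, oneSubdirectSum, toBlocks₁₁,
      toBlocks₁₂, toBlocks₂₁, toBlocks₂₂, hB, hD, hv, SignAdmissible.zero]

/-- With a 1-separation with cut vertex `v`, if `C ∈ S(G₁,Σ₁)_E` and
`D ∈ S(G₂,Σ₂)_O` have `c_vv < 0` and `d_vv > 0`, then `α C ⊕₁ D ∈ S(G,Σ)` for some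
`α > 0`. -/
theorem stmt11 {k r : ℕ} (G : SignedGraph (Fin k ⊕ (Fin 1 ⊕ Fin r)))
    (G₁ : SignedGraph (Fin k ⊕ Fin 1)) (G₂ : SignedGraph (Fin 1 ⊕ Fin r))
    (hsep : IsOneSeparation G G₁ G₂)
    (C : Matrix (Fin k ⊕ Fin 1) (Fin k ⊕ Fin 1) ℝ)
    (D : Matrix (Fin 1 ⊕ Fin r) (Fin 1 ⊕ Fin r) ℝ)
    (hC : C ∈ (G₁.addEvenLoop (Sum.inr 0)).matSet)
    (hD : D ∈ (G₂.addOddLoop (Sum.inl 0)).matSet)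
    (hCv : C (Sum.inr 0) (Sum.inr 0) < 0)
    (hDv : 0 < D (Sum.inl 0) (Sum.inl 0)) :
    ∃ α : ℝ, 0 < α ∧ oneSubdirectSum (α • C) D ∈ G.matSet := by
  obtain ⟨α, hα, hcut⟩ := exists_pos_signAdmissible_mul_add
    (G₁.odd (Sum.inr 0) (Sum.inr 0) ∨ G₂.odd (Sum.inl 0) (Sum.inl 0))
    (G₁.even (Sum.inr 0) (Sum.inr 0) ∨ G₂.even (Sum.inl 0) (Sum.inl 0)) hCv hDv
  refine ⟨α, hα, SignedGraph.mem_matSet_iff.2 ⟨?_, ?_⟩⟩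
  · rw [oneSubdirectSum_transpose, transpose_smul, hC.1, hD.1]
  · rw [hsep.odd_eq, hsep.even_eq]
    exact signAdmissible_oneSubdirectSum
      (fun a b hab => (SignedGraph.signAdmissible_of_mem_matSet_addEvenLoop hC hab).pos_mul hα)
      (fun a b hab => SignedGraph.signAdmissible_of_mem_matSet_addOddLoop hD hab) hcut
end

section
/- Let (G,Σ) be a signed graph with a 1-separation [(G₁,Σ₁),(G₂,Σ₂)] with cut vertex v, and let n = |V(G)|. Then S(G₁,Σ₁) ⊕ S(G₂,Σ₂) → S(G,Σ): for every A₁ ∈ S(G₁,Σ₁) and A₂ ∈ S(G₂,Σ₂), there exist a matrix M ∈ S(G,Σ) and a real matrix P such that Pᵀ diag(A₁,A₂) P = M. -/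
open Matrix

/-!
With `P` the 0/1 matrix of the two vertex embeddings, `Pᵀ diag(A₁, A₂) P` is the 1-sum of `A₁` and
`A₂`: each `Aᵢ` placed on the vertices of `Gᵢ`, padded by zeros, and the two added. Every entry of
the 1-sum is thus a sum `x + y` of an entry fitting the edges of `G₁` and one fitting those of
`G₂`, and such a sum fits the union of the edges: when `x` and `y` have opposite signs and cancel,
both an odd and an even edge are present, which `S(G,Σ)` allows at a zero entry.
-/

/-- The entry condition of `SignedGraph.matSet`, with `o` and `e` the presence of an odd and of an
even edge. -/
def SignMatches (o e : Prop) (x : ℝ) : Prop :=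
  (0 < x → o) ∧ (x < 0 → e) ∧ (x = 0 → (o ∧ e) ∨ (¬ o ∧ ¬ e))

theorem signMatches_false_false_zero : SignMatches False False 0 := by
  simp [SignMatches]

theorem SignMatches.add {o₁ e₁ o₂ e₂ : Prop} {x y : ℝ} (h₁ : SignMatches o₁ e₁ x)
    (h₂ : SignMatches o₂ e₂ y) : SignMatches (o₁ ∨ o₂) (e₁ ∨ e₂) (x + y) := by
  obtain ⟨pos₁, neg₁, zero₁⟩ := h₁
  obtain ⟨pos₂, neg₂, zero₂⟩ := h₂
  refine ⟨fun h => ?_, fun h => ?_, fun h => ?_⟩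
  · rcases lt_or_ge 0 x with hx | hx
    exacts [.inl (pos₁ hx), .inr (pos₂ (by linarith))]
  · rcases lt_or_ge x 0 with hx | hx
    exacts [.inl (neg₁ hx), .inr (neg₂ (by linarith))]
  · rcases lt_trichotomy x 0 with hx | hx | hx
    · exact .inl ⟨.inr (pos₂ (by linarith)), .inl (neg₁ hx)⟩
    · have hy : y = 0 := by linarith
      rcases zero₁ hx with _ | _ <;> rcases zero₂ hy with _ | _ <;> tauto
    · exact .inl ⟨.inl (pos₁ hx), .inr (neg₂ (by linarith))⟩

namespace Matrix

theorem IsSymm.transpose_mul_mul {m n R : Type*} [Fintype m] [CommSemiring R]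
    {A : Matrix m m R} (hA : A.IsSymm) (B : Matrix m n R) : (Bᵀ * A * B).IsSymm := by
  simp [IsSymm, transpose_mul, hA.eq, Matrix.mul_assoc]

theorem transpose_fromRows_mul_fromBlocks_mul_fromRows {m₁ m₂ n R : Type*} [Fintype m₁]
    [Fintype m₂] [CommSemiring R] (B₁ : Matrix m₁ n R) (B₂ : Matrix m₂ n R)
    (A₁ : Matrix m₁ m₁ R) (A₂ : Matrix m₂ m₂ R) :
    (fromRows B₁ B₂)ᵀ * fromBlocks A₁ 0 0 A₂ * fromRows B₁ B₂ =
      B₁ᵀ * A₁ * B₁ + B₂ᵀ * A₂ * B₂ := by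
  simp [transpose_fromRows, fromCols_mul_fromBlocks, fromCols_mul_fromRows]

end Matrix

open Function

section EmbMatrix

variable {α β γ R : Type*} [Fintype α] [DecidableEq β] [NonAssocSemiring R]

def embMatrix (e : α → β) : Matrix α β R :=
  of fun a u => if e a = u then 1 else 0

theorem transpose_embMatrix_mul_apply {e : α → β} (he : Injective e) (A : Matrix α γ R)
    (a : α) (c : γ) : ((embMatrix e : Matrix α β R)ᵀ * A) (e a) c = A a c := by
  rw [mul_apply, Finset.sum_eq_single a] <;> simp +contextual [embMatrix, he.eq_iff]

theorem transpose_embMatrix_mul_apply_of_notMem_range {e : α → β} (A : Matrix α γ R) {u : β}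
    (hu : u ∉ Set.range e) (c : γ) : ((embMatrix e : Matrix α β R)ᵀ * A) u c = 0 := by
  simp_all [mul_apply, embMatrix]

theorem mul_embMatrix_apply {e : α → β} (he : Injective e) (A : Matrix γ α R) (c : γ) (b : α) :
    (A * (embMatrix e : Matrix α β R)) c (e b) = A c b := by
  rw [mul_apply, Finset.sum_eq_single b] <;> simp +contextual [embMatrix, he.eq_iff]

theorem mul_embMatrix_apply_of_notMem_range {e : α → β} (A : Matrix γ α R) (c : γ) {w : β}
    (hw : w ∉ Set.range e) : (A * (embMatrix e : Matrix α β R)) c w = 0 := by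
  simp_all [mul_apply, embMatrix]

theorem signMatches_transpose_embMatrix_mul_mul {e : α → β} (he : Injective e)
    {odd even : α → α → Prop} {A : Matrix α α ℝ}
    (hA : ∀ a b, SignMatches (odd a b) (even a b) (A a b)) (u w : β) :
    SignMatches (∃ a b, e a = u ∧ e b = w ∧ odd a b) (∃ a b, e a = u ∧ e b = w ∧ even a b)
      (((embMatrix e : Matrix α β ℝ)ᵀ * A * (embMatrix e : Matrix α β ℝ)) u w) := by
  by_cases hu : u ∈ Set.range e
  · by_cases hw : w ∈ Set.range e
    · obtain ⟨a, rfl⟩ := hu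
      obtain ⟨b, rfl⟩ := hw
      rw [mul_embMatrix_apply he, transpose_embMatrix_mul_apply he]
      simpa [he.eq_iff] using hA a b
    · rw [mul_embMatrix_apply_of_notMem_range _ _ hw]
      rw [Set.mem_range, not_exists] at hw
      simpa [hw] using signMatches_false_false_zero
  · rw [Matrix.mul_assoc, transpose_embMatrix_mul_apply_of_notMem_range _ hu]
    rw [Set.mem_range, not_exists] at hu
    simpa [hu] using signMatches_false_false_zero

end EmbMatrix

section OneSum

variable {α₁ α₂ V : Type*} [Fintype α₁] [Fintype α₂] [DecidableEq V]

/-- The paper's `A₁ ⊕₁ A₂`: `A₁` and `A₂` placed on the vertices `e₁ '' α₁` and `e₂ '' α₂`, with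
the entries at shared vertices added. -/
def oneSum (e₁ : α₁ → V) (e₂ : α₂ → V) (A₁ : Matrix α₁ α₁ ℝ) (A₂ : Matrix α₂ α₂ ℝ) :
    Matrix V V ℝ :=
  (embMatrix e₁ : Matrix α₁ V ℝ)ᵀ * A₁ * embMatrix e₁ +
    (embMatrix e₂ : Matrix α₂ V ℝ)ᵀ * A₂ * embMatrix e₂

theorem transpose_fromRows_embMatrix_mul_fromBlocks_mul (e₁ : α₁ → V) (e₂ : α₂ → V)
    (A₁ : Matrix α₁ α₁ ℝ) (A₂ : Matrix α₂ α₂ ℝ) :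
    (fromRows (embMatrix e₁) (embMatrix e₂) : Matrix (α₁ ⊕ α₂) V ℝ)ᵀ * fromBlocks A₁ 0 0 A₂ *
      fromRows (embMatrix e₁) (embMatrix e₂) = oneSum e₁ e₂ A₁ A₂ :=
  transpose_fromRows_mul_fromBlocks_mul_fromRows _ _ _ _

theorem oneSum_mem_matSet [Fintype V] {G : SignedGraph V} {G₁ : SignedGraph α₁}
    {G₂ : SignedGraph α₂} {e₁ : α₁ → V} {e₂ : α₂ → V} (he₁ : Injective e₁) (he₂ : Injective e₂)
    (hodd : ∀ u w, G.odd u w ↔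
      (∃ a b, e₁ a = u ∧ e₁ b = w ∧ G₁.odd a b) ∨ (∃ a b, e₂ a = u ∧ e₂ b = w ∧ G₂.odd a b))
    (heven : ∀ u w, G.even u w ↔
      (∃ a b, e₁ a = u ∧ e₁ b = w ∧ G₁.even a b) ∨ (∃ a b, e₂ a = u ∧ e₂ b = w ∧ G₂.even a b))
    {A₁ : Matrix α₁ α₁ ℝ} {A₂ : Matrix α₂ α₂ ℝ} (hA₁ : A₁ ∈ G₁.matSet) (hA₂ : A₂ ∈ G₂.matSet) :
    oneSum e₁ e₂ A₁ A₂ ∈ G.matSet := by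
  obtain ⟨hsymm₁, hsign₁⟩ := hA₁
  obtain ⟨hsymm₂, hsign₂⟩ := hA₂
  refine ⟨(IsSymm.transpose_mul_mul hsymm₁ _).add (IsSymm.transpose_mul_mul hsymm₂ _),
    fun u w => ?_⟩
  rw [hodd, heven]
  exact (signMatches_transpose_embMatrix_mul_mul he₁ hsign₁ u w).add
    (signMatches_transpose_embMatrix_mul_mul he₂ hsign₂ u w)

end OneSum

theorem emb₁_injective {k r : ℕ} : Injective (emb₁ (k := k) (r := r)) :=
  Sum.inl_injective.sumElim (Sum.inr_injective.comp Sum.inl_injective)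
    fun _ _ => Sum.inl_ne_inr

theorem emb₂_injective {k r : ℕ} : Injective (emb₂ (k := k) (r := r)) :=
  Sum.inr_injective

/-- `S(G₁,Σ₁) ⊕ S(G₂,Σ₂) → S(G,Σ)` for a 1-separation: for all
`A₁ ∈ S(G₁,Σ₁)`, `A₂ ∈ S(G₂,Σ₂)` there are `M ∈ S(G,Σ)` and a real matrix `P` with
`Pᵀ diag(A₁, A₂) P = M`. -/
theorem stmt12 {k r : ℕ} (G : SignedGraph (Fin k ⊕ (Fin 1 ⊕ Fin r)))
    (G₁ : SignedGraph (Fin k ⊕ Fin 1)) (G₂ : SignedGraph (Fin 1 ⊕ Fin r))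
    (hsep : IsOneSeparation G G₁ G₂)
    (A₁ : Matrix (Fin k ⊕ Fin 1) (Fin k ⊕ Fin 1) ℝ) (hA₁ : A₁ ∈ G₁.matSet)
    (A₂ : Matrix (Fin 1 ⊕ Fin r) (Fin 1 ⊕ Fin r) ℝ) (hA₂ : A₂ ∈ G₂.matSet) :
    ∃ M ∈ G.matSet,
      ∃ P : Matrix ((Fin k ⊕ Fin 1) ⊕ (Fin 1 ⊕ Fin r)) (Fin k ⊕ (Fin 1 ⊕ Fin r)) ℝ,
        Pᵀ * fromBlocks A₁ 0 0 A₂ * P = M :=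
  ⟨oneSum emb₁ emb₂ A₁ A₂, oneSum_mem_matSet emb₁_injective emb₂_injective hsep.1 hsep.2 hA₁ hA₂,
    fromRows (embMatrix emb₁) (embMatrix emb₂),
    transpose_fromRows_embMatrix_mul_fromBlocks_mul emb₁ emb₂ A₁ A₂⟩
end

section
/- Let (G,Σ) be a signed graph with a 1-separation [(G₁,Σ₁),(G₂,Σ₂)] with cut vertex v. Then S((G₁,Σ₁)−v) ⊕ S((G₂,Σ₂)−v) ⊕ H → S(G,Σ): for all B₁ ∈ S((G₁,Σ₁)−v), B₂ ∈ S((G₂,Σ₂)−v), there exist M ∈ S(G,Σ) and a real matrix P with Pᵀ diag(B₁,B₂,H) P = M, where H = [[0,1],[1,0]]. -/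
open Matrix

/-- `(G₁,Σ₁) − v`: the signed graph induced on the non-cut vertices of the first part. -/
def delCut₁ {k : ℕ} (G₁ : SignedGraph (Fin k ⊕ Fin 1)) : SignedGraph (Fin k) where
  odd := fun i j => G₁.odd (Sum.inl i) (Sum.inl j)
  even := fun i j => G₁.even (Sum.inl i) (Sum.inl j)
  odd_symm := fun i j h => G₁.odd_symm _ _ h
  even_symm := fun i j h => G₁.even_symm _ _ h

/-- `(G₂,Σ₂) − v`: the signed graph induced on the non-cut vertices of the second part. -/
def delCut₂ {r : ℕ} (G₂ : SignedGraph (Fin 1 ⊕ Fin r)) : SignedGraph (Fin r) where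
  odd := fun i j => G₂.odd (Sum.inr i) (Sum.inr j)
  even := fun i j => G₂.even (Sum.inr i) (Sum.inr j)
  odd_symm := fun i j h => G₂.odd_symm _ _ h
  even_symm := fun i j h => G₂.even_symm _ _ h


/-! ### Auxiliary constructions -/

def cutv {k r : ℕ} : Fin k ⊕ (Fin 1 ⊕ Fin r) := Sum.inr (Sum.inl 0)

open Classical in
/-- A canonical real value for the edge `u – v` (v the cut vertex): `1` if odd only,
`-1` if even only, `0` otherwise. -/
noncomputable def fEdge {k r : ℕ} (G : SignedGraph (Fin k ⊕ (Fin 1 ⊕ Fin r)))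
    (u : Fin k ⊕ (Fin 1 ⊕ Fin r)) : ℝ :=
  (if G.odd u cutv then 1 else 0) - (if G.even u cutv then 1 else 0)

lemma fEdge_cond {k r : ℕ} (G : SignedGraph (Fin k ⊕ (Fin 1 ⊕ Fin r)))
    (u : Fin k ⊕ (Fin 1 ⊕ Fin r)) :
    (0 < fEdge G u → G.odd u cutv) ∧ (fEdge G u < 0 → G.even u cutv) ∧
      (fEdge G u = 0 →
        (G.odd u cutv ∧ G.even u cutv) ∨ (¬ G.odd u cutv ∧ ¬ G.even u cutv)) := by
  classical
  unfold fEdge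
  by_cases h1 : G.odd u cutv <;> by_cases h2 : G.even u cutv <;>
    simp [h1, h2] <;> norm_num

open Classical in
noncomputable def Pmat {k r : ℕ} (G : SignedGraph (Fin k ⊕ (Fin 1 ⊕ Fin r))) :
    Matrix ((Fin k ⊕ Fin r) ⊕ Fin 2) (Fin k ⊕ (Fin 1 ⊕ Fin r)) ℝ := fun a u =>
  match a with
  | .inl (.inl i) => if u = .inl i then 1 else 0
  | .inl (.inr j) => if u = .inr (.inr j) then 1 else 0
  | .inr a => if a = 0 then (if u = cutv then fEdge G cutv / 2 else fEdge G u)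
              else (if u = cutv then 1 else 0)

noncomputable def Mmat {k r : ℕ} (G : SignedGraph (Fin k ⊕ (Fin 1 ⊕ Fin r)))
    (B₁ : Matrix (Fin k) (Fin k) ℝ) (B₂ : Matrix (Fin r) (Fin r) ℝ) :
    Matrix (Fin k ⊕ (Fin 1 ⊕ Fin r)) (Fin k ⊕ (Fin 1 ⊕ Fin r)) ℝ := fun u w =>
  match u, w with
  | .inl i, .inl j => B₁ i j
  | .inl i, .inr (.inl _) => fEdge G (.inl i)
  | .inl _, .inr (.inr _) => 0
  | .inr (.inl _), w => fEdge G w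
  | .inr (.inr _), .inl _ => 0
  | .inr (.inr i), .inr (.inl _) => fEdge G (.inr (.inr i))
  | .inr (.inr i), .inr (.inr j) => B₂ i j

theorem keyeq {k r : ℕ} (G : SignedGraph (Fin k ⊕ (Fin 1 ⊕ Fin r)))
    (B₁ : Matrix (Fin k) (Fin k) ℝ) (B₂ : Matrix (Fin r) (Fin r) ℝ) :
    (Pmat G)ᵀ * fromBlocks (fromBlocks B₁ 0 0 B₂) 0 0 (!![0, 1; 1, 0]) * Pmat G
      = Mmat G B₁ B₂ := by
  classical
  ext u w
  simp only [Matrix.mul_apply, Matrix.transpose_apply, Fintype.sum_sum_type,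
    Fin.sum_univ_two, Pmat, Mmat, fromBlocks, Sum.elim_inl, Sum.elim_inr,
    Matrix.zero_apply, Matrix.of_apply]
  rcases u with i | x | i <;> rcases w with j | y | j <;>
    simp [Finset.sum_ite_eq, Finset.sum_ite_eq', mul_comm, Fin.fin_one_eq_zero,
      cutv] <;> ring_nf

/-- `S((G₁,Σ₁)−v) ⊕ S((G₂,Σ₂)−v) ⊕ H → S(G,Σ)` for a 1-separation:
for all `B₁ ∈ S((G₁,Σ₁)−v)`, `B₂ ∈ S((G₂,Σ₂)−v)` there are `M ∈ S(G,Σ)` and a real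
matrix `P` with `Pᵀ diag(B₁, B₂, H) P = M`, where `H = [[0,1],[1,0]]`. -/
theorem stmt13 {k r : ℕ} (G : SignedGraph (Fin k ⊕ (Fin 1 ⊕ Fin r)))
    (G₁ : SignedGraph (Fin k ⊕ Fin 1)) (G₂ : SignedGraph (Fin 1 ⊕ Fin r))
    (hsep : IsOneSeparation G G₁ G₂)
    (B₁ : Matrix (Fin k) (Fin k) ℝ) (hB₁ : B₁ ∈ (delCut₁ G₁).matSet)
    (B₂ : Matrix (Fin r) (Fin r) ℝ) (hB₂ : B₂ ∈ (delCut₂ G₂).matSet) :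
    ∃ M ∈ G.matSet,
      ∃ P : Matrix ((Fin k ⊕ Fin r) ⊕ Fin 2) (Fin k ⊕ (Fin 1 ⊕ Fin r)) ℝ,
        Pᵀ * fromBlocks (fromBlocks B₁ 0 0 B₂) 0 0 (!![0, 1; 1, 0]) * P = M := by
  classical
  have hodd1 : ∀ i j : Fin k, G.odd (Sum.inl i) (Sum.inl j) ↔
      G₁.odd (Sum.inl i) (Sum.inl j) := by
    intro i j
    rw [hsep.1]
    constructor
    · rintro (⟨a, b, ha, hb, h⟩ | ⟨a, b, ha, hb, h⟩)
      · rcases a with a | a <;> rcases b with b | b <;> simp [emb₁] at ha hb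
        subst ha; subst hb; exact h
      · rcases a with a | a <;> simp [emb₂] at ha
    · intro h; exact Or.inl ⟨Sum.inl i, Sum.inl j, rfl, rfl, h⟩
  have heven1 : ∀ i j : Fin k, G.even (Sum.inl i) (Sum.inl j) ↔
      G₁.even (Sum.inl i) (Sum.inl j) := by
    intro i j
    rw [hsep.2]
    constructor
    · rintro (⟨a, b, ha, hb, h⟩ | ⟨a, b, ha, hb, h⟩)
      · rcases a with a | a <;> rcases b with b | b <;> simp [emb₁] at ha hb
        subst ha; subst hb; exact h
      · rcases a with a | a <;> simp [emb₂] at ha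
    · intro h; exact Or.inl ⟨Sum.inl i, Sum.inl j, rfl, rfl, h⟩
  have hodd2 : ∀ i j : Fin r, G.odd (Sum.inr (Sum.inr i)) (Sum.inr (Sum.inr j)) ↔
      G₂.odd (Sum.inr i) (Sum.inr j) := by
    intro i j
    rw [hsep.1]
    constructor
    · rintro (⟨a, b, ha, hb, h⟩ | ⟨a, b, ha, hb, h⟩)
      · rcases a with a | a <;> simp [emb₁] at ha
      · rcases a with a | a <;> rcases b with b | b <;> simp [emb₂] at ha hb
        subst ha; subst hb; exact h
    · intro h; exact Or.inr ⟨Sum.inr i, Sum.inr j, rfl, rfl, h⟩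
  have heven2 : ∀ i j : Fin r, G.even (Sum.inr (Sum.inr i)) (Sum.inr (Sum.inr j)) ↔
      G₂.even (Sum.inr i) (Sum.inr j) := by
    intro i j
    rw [hsep.2]
    constructor
    · rintro (⟨a, b, ha, hb, h⟩ | ⟨a, b, ha, hb, h⟩)
      · rcases a with a | a <;> simp [emb₁] at ha
      · rcases a with a | a <;> rcases b with b | b <;> simp [emb₂] at ha hb
        subst ha; subst hb; exact h
    · intro h; exact Or.inr ⟨Sum.inr i, Sum.inr j, rfl, rfl, h⟩
  have hcross : ∀ (i : Fin k) (j : Fin r),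
      ¬ G.odd (Sum.inl i) (Sum.inr (Sum.inr j)) ∧
        ¬ G.even (Sum.inl i) (Sum.inr (Sum.inr j)) := by
    intro i j
    constructor
    · rw [hsep.1]
      rintro (⟨a, b, ha, hb, h⟩ | ⟨a, b, ha, hb, h⟩)
      · rcases b with b | b <;> simp [emb₁] at hb
      · rcases a with a | a <;> simp [emb₂] at ha
    · rw [hsep.2]
      rintro (⟨a, b, ha, hb, h⟩ | ⟨a, b, ha, hb, h⟩)
      · rcases b with b | b <;> simp [emb₁] at hb
      · rcases a with a | a <;> simp [emb₂] at ha
  refine ⟨Mmat G B₁ B₂, ⟨?_, ?_⟩, Pmat G, keyeq G B₁ B₂⟩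
  · -- symmetry
    ext u w
    rcases u with i | x | i <;> rcases w with j | y | j <;>
      simp only [Matrix.transpose_apply, Mmat] <;>
      first
        | rfl
        | simp [Fin.fin_one_eq_zero]
        | exact congrFun (congrFun hB₁.1 _) _
        | exact congrFun (congrFun hB₂.1 _) _
  · -- sign conditions
    intro u w
    rcases u with i | x | i <;> rcases w with j | y | j
    · refine ⟨fun h => (hodd1 i j).2 ((hB₁.2 i j).1 h),
        fun h => (heven1 i j).2 ((hB₁.2 i j).2.1 h), fun h => ?_⟩
      rcases (hB₁.2 i j).2.2 h with ⟨h1, h2⟩ | ⟨h1, h2⟩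
      · exact Or.inl ⟨(hodd1 i j).2 h1, (heven1 i j).2 h2⟩
      · exact Or.inr ⟨fun hc => h1 ((hodd1 i j).1 hc),
          fun hc => h2 ((heven1 i j).1 hc)⟩
    · -- (inl i, cut vertex)
      have hy : Sum.inr (Sum.inl y) = (cutv : Fin k ⊕ (Fin 1 ⊕ Fin r)) := by
        simp [cutv, Fin.fin_one_eq_zero]
      rw [hy]
      exact fEdge_cond G (Sum.inl i)
    · -- cross: zero entry
      refine ⟨fun h => absurd h (lt_irrefl _), fun h => absurd h (lt_irrefl _),
        fun _ => Or.inr (hcross i j)⟩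
    · -- (cut vertex, inl j)
      have hx : Sum.inr (Sum.inl x) = (cutv : Fin k ⊕ (Fin 1 ⊕ Fin r)) := by
        simp [cutv, Fin.fin_one_eq_zero]
      rw [hx]
      obtain ⟨c1, c2, c3⟩ := fEdge_cond G (Sum.inl j)
      refine ⟨fun h => G.odd_symm _ _ (c1 h), fun h => G.even_symm _ _ (c2 h),
        fun h => ?_⟩
      rcases c3 h with ⟨h1, h2⟩ | ⟨h1, h2⟩
      · exact Or.inl ⟨G.odd_symm _ _ h1, G.even_symm _ _ h2⟩
      · exact Or.inr ⟨fun hc => h1 (G.odd_symm _ _ hc),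
          fun hc => h2 (G.even_symm _ _ hc)⟩
    · -- (cut, cut)
      have hx : Sum.inr (Sum.inl x) = (cutv : Fin k ⊕ (Fin 1 ⊕ Fin r)) := by
        simp [cutv, Fin.fin_one_eq_zero]
      have hy : Sum.inr (Sum.inl y) = (cutv : Fin k ⊕ (Fin 1 ⊕ Fin r)) := by
        simp [cutv, Fin.fin_one_eq_zero]
      rw [hx, hy]
      exact fEdge_cond G cutv
    · -- (cut, inr inr j)
      have hx : Sum.inr (Sum.inl x) = (cutv : Fin k ⊕ (Fin 1 ⊕ Fin r)) := by
        simp [cutv, Fin.fin_one_eq_zero]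
      rw [hx]
      obtain ⟨c1, c2, c3⟩ := fEdge_cond G (Sum.inr (Sum.inr j))
      refine ⟨fun h => G.odd_symm _ _ (c1 h), fun h => G.even_symm _ _ (c2 h),
        fun h => ?_⟩
      rcases c3 h with ⟨h1, h2⟩ | ⟨h1, h2⟩
      · exact Or.inl ⟨G.odd_symm _ _ h1, G.even_symm _ _ h2⟩
      · exact Or.inr ⟨fun hc => h1 (G.odd_symm _ _ hc),
          fun hc => h2 (G.even_symm _ _ hc)⟩
    · -- cross transposed: zero entry
      obtain ⟨h1, h2⟩ := hcross j i
      refine ⟨fun h => absurd h (lt_irrefl _), fun h => absurd h (lt_irrefl _),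
        fun _ => Or.inr ⟨fun hc => h1 (G.odd_symm _ _ hc),
          fun hc => h2 (G.even_symm _ _ hc)⟩⟩
    · -- (inr inr i, cut)
      have hy : Sum.inr (Sum.inl y) = (cutv : Fin k ⊕ (Fin 1 ⊕ Fin r)) := by
        simp [cutv, Fin.fin_one_eq_zero]
      rw [hy]
      exact fEdge_cond G (Sum.inr (Sum.inr i))
    · refine ⟨fun h => (hodd2 i j).2 ((hB₂.2 i j).1 h),
        fun h => (heven2 i j).2 ((hB₂.2 i j).2.1 h), fun h => ?_⟩
      rcases (hB₂.2 i j).2.2 h with ⟨h1, h2⟩ | ⟨h1, h2⟩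
      · exact Or.inl ⟨(hodd2 i j).2 h1, (heven2 i j).2 h2⟩
      · exact Or.inr ⟨fun hc => h1 ((hodd2 i j).1 hc),
          fun hc => h2 ((heven2 i j).1 hc)⟩
end

section
/- Let (G,Σ) be the signed graph on 3 vertices forming a path with both edges odd and with an odd loop at every vertex. Then (2,0) ∈ ℐ(G,Σ), and (0,0), (1,0) ∉ ℐ(G,Σ). That is, there exists a positive semidefinite matrix of rank 2 in S(G,Σ), and every matrix in S(G,Σ) has at least two positive eigenvalues or a negative eigenvalue, and no matrix has fewer than 2 nonzero eigenvalues with all of them positive except rank ≥ 2. -/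
open Matrix

open Classical in
noncomputable def pin {n : Type*} [Fintype n] [DecidableEq n] (A : Matrix n n ℝ) : ℕ × ℕ :=
  if h : A.IsHermitian then
    (Fintype.card {i // 0 < h.eigenvalues i}, Fintype.card {i // h.eigenvalues i < 0})
  else (0, 0)

/-- Membership in `S(G,Σ)` for the signed graph on 3 vertices forming a path with both
edges odd and an odd loop at every vertex: symmetric, nonnegative diagonal (odd loops, no
even loops), zero `(0,2)` entry (no edge), positive `(0,1)`, `(1,2)` entries (odd edges). -/
def OddPathOddLoops (A : Matrix (Fin 3) (Fin 3) ℝ) : Prop :=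
  Aᵀ = A ∧ 0 ≤ A 0 0 ∧ 0 ≤ A 1 1 ∧ 0 ≤ A 2 2 ∧ A 0 2 = 0 ∧ 0 < A 0 1 ∧ 0 < A 1 2

/-!
If `pin A = (p, 0)` then `A` is positive semidefinite and `p = rank A`. In a positive
semidefinite matrix a zero diagonal entry forces its whole row to vanish, so the positive
entries `A 0 1`, `A 1 2` make both corner entries `A 0 0`, `A 2 2` positive; with
`A 0 2 = 0` the corner `2 × 2` minor is nonzero and `rank A ≥ 2`. Conversely `Bᴴ B` with
`B = !![1, 1, 0; 0, 1, 1]` lies in `S(G,Σ)` and has rank `2`.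
-/

theorem Matrix.two_le_rank_of_det_submatrix_ne_zero {m n K : Type*} [Fintype n] [Field K]
    (A : Matrix m n K) (r : Fin 2 → m) (c : Fin 2 → n) (h : (A.submatrix r c).det ≠ 0) :
    2 ≤ A.rank :=
  calc 2 = (A.submatrix r c).rank := by
        rw [rank_of_isUnit _ ((isUnit_iff_isUnit_det _).mpr h.isUnit), Fintype.card_fin]
    _ ≤ A.rank := rank_submatrix_le A r c

open ComplexOrder in
theorem Matrix.PosSemidef.mul_apply_le {n 𝕜 : Type*} [Fintype n] [RCLike 𝕜] {A : Matrix n n 𝕜}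
    (hA : A.PosSemidef) (i j : n) : A i j * A j i ≤ A i i * A j j := by
  have := (hA.submatrix ![i, j]).det_nonneg
  rw [det_fin_two] at this
  simpa [sub_nonneg] using this

section pin

variable {n : Type*} [Fintype n] [DecidableEq n] {A : Matrix n n ℝ}

theorem pin_of_posSemidef (hA : A.PosSemidef) : pin A = (A.rank, 0) := by
  rw [pin, dif_pos hA.isHermitian, hA.isHermitian.rank_eq_card_non_zero_eigs]
  congr 1
  · exact Fintype.card_congr <| Equiv.subtypeEquivRight fun i =>
      (hA.eigenvalues_nonneg i).lt_iff_ne'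
  · exact Fintype.card_eq_zero_iff.mpr ⟨fun i => (hA.eigenvalues_nonneg i).not_gt i.2⟩

theorem posSemidef_of_pin_snd_eq_zero (hA : A.IsHermitian) (h : (pin A).2 = 0) :
    A.PosSemidef := by
  rw [pin, dif_pos hA] at h
  rw [hA.posSemidef_iff_eigenvalues_nonneg]
  intro i
  by_contra! hi
  exact (Fintype.card_eq_zero_iff.mp h).false ⟨i, hi⟩

end pin

theorem OddPathOddLoops.two_le_rank_of_posSemidef {A : Matrix (Fin 3) (Fin 3) ℝ}
    (hA : OddPathOddLoops A) (hpsd : A.PosSemidef) : 2 ≤ A.rank := by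
  obtain ⟨hsymm, hd0, hd1, hd2, h02, h01, h12⟩ := hA
  have h10 : A 1 0 = A 0 1 := congrFun₂ hsymm 0 1
  have h21 : A 2 1 = A 1 2 := congrFun₂ hsymm 1 2
  have h20 : A 2 0 = 0 := (congrFun₂ hsymm 0 2).trans h02
  have h00 : A 0 0 ≠ 0 := by
    have := hpsd.mul_apply_le 0 1
    rw [h10] at this
    nlinarith
  have h22 : A 2 2 ≠ 0 := by
    have := hpsd.mul_apply_le 2 1
    rw [h21] at this
    nlinarith
  refine A.two_le_rank_of_det_submatrix_ne_zero ![0, 2] ![0, 2] ?_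
  rw [det_fin_two]
  simp [h02, h20, h00, h22]

theorem exists_oddPathOddLoops_pin_eq_two_zero :
    ∃ A : Matrix (Fin 3) (Fin 3) ℝ, OddPathOddLoops A ∧ pin A = (2, 0) := by
  let B : Matrix (Fin 2) (Fin 3) ℝ := !![1, 1, 0; 0, 1, 1]
  have hpsd := posSemidef_conjTranspose_mul_self B
  refine ⟨Bᴴ * B, ⟨isHermitian_iff_isSymm.mp hpsd.isHermitian, ?_⟩, ?_⟩
  · simp [B, mul_apply, Fin.sum_univ_two]
  · have hB : 2 ≤ B.rank := B.two_le_rank_of_det_submatrix_ne_zero id ![0, 1] (by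
      rw [det_fin_two]; simp [B])
    rw [pin_of_posSemidef hpsd, rank_conjTranspose_mul_self, le_antisymm B.rank_le_height hB]

theorem OddPathOddLoops.two_le_pin_fst {A : Matrix (Fin 3) (Fin 3) ℝ} (hA : OddPathOddLoops A)
    (h : (pin A).2 = 0) : 2 ≤ (pin A).1 := by
  have hpsd := posSemidef_of_pin_snd_eq_zero (isHermitian_iff_isSymm.mpr hA.1) h
  rw [pin_of_posSemidef hpsd]
  exact hA.two_le_rank_of_posSemidef hpsd

/-- For the odd 2-path with odd loops at all vertices,
`(2,0) ∈ ℐ(G,Σ)` while `(0,0), (1,0) ∉ ℐ(G,Σ)`. -/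
theorem stmt15 :
    (∃ A : Matrix (Fin 3) (Fin 3) ℝ, OddPathOddLoops A ∧ pin A = (2, 0)) ∧
    (∀ A : Matrix (Fin 3) (Fin 3) ℝ, OddPathOddLoops A →
      pin A ≠ (0, 0) ∧ pin A ≠ (1, 0)) := by
  refine ⟨exists_oddPathOddLoops_pin_eq_two_zero, fun A hA => ⟨fun h => ?_, fun h => ?_⟩⟩ <;>
    simpa [h] using hA.two_le_pin_fst (by simp [h])
end

section
/- Let A₁₁ be a symmetric k×k real matrix, A₃₃ a symmetric (n−k−1)×(n−k−1) real matrix, and A₂₁ ∈ ℝ^{1×k}, A₂₃ ∈ ℝ^{1×(n−k−1)} row vectors, a₂₂ ∈ ℝ. Suppose there exists u ∈ ker(diag(A₁₁, A₃₃)) with [A₂₁, A₂₃]u = z ≠ 0 (z a scalar). Then the symmetric n×n matrix A = [[A₁₁, A₂₁ᵀ, 0],[A₂₁, a₂₂, A₂₃],[0, A₂₃ᵀ, A₃₃]] has the same numbers of positive and negative eigenvalues as H ⊕ A₁₁ ⊕ A₃₃, where H = [[0,1],[1,0]]. In particular pin(A) = pin(A₁₁) + pin(A₃₃) + (1,1).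 -/
open Matrix

/-!
Sylvester's law of inertia in a one-sided form: if the quadratic form of `A` is the pullback of
that of `B` along some linear map `g`, then `pin A ≤ pin B` componentwise, because `g` carries
the positive eigendirections of `A` to a subspace on which the form of `B` is positive
definite, and such a subspace projects injectively onto the positive eigendirections of `B`.

After moving the middle index to the front, `A` is the matrix `B = A₁₁ ⊕ A₃₃` bordered by the row
`R = [A₂₁, A₂₃]` and the corner `c = a₂₂`, whose form is `c t² + 2 t (R w) + wᵀ B w`. The map
`(t, w) ↦ (t, c t / 2 + R w, w)` pulls the form `2 t s + wᵀ B w` of `H ⊕ B` back to it, and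
`(t, s, w) ↦ (t, w + σ u)` with `σ = (s - c t / 2 - R w) / (R u)` pulls it back to the form of
`H ⊕ B`, since `B u = 0`. So the two matrices have the same inertia, and `pin` is additive on
block-diagonal matrices because their characteristic polynomials multiply.
-/

section Inertia

variable {m n : Type*} [Fintype m] [Fintype n]

theorem dotProduct_diagonal_mulVec_self [DecidableEq m] (μ x : m → ℝ) :
    x ⬝ᵥ diagonal μ *ᵥ x = ∑ i, μ i * x i ^ 2 := by
  simp only [dotProduct, mulVec_diagonal]
  exact Finset.sum_congr rfl fun i _ => by ring

theorem card_pos_le_of_quadForm_diagonal_comp [DecidableEq m] [DecidableEq n] {μ : m → ℝ}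
    {ν : n → ℝ} (g : (m → ℝ) →ₗ[ℝ] n → ℝ)
    (hg : ∀ x, g x ⬝ᵥ diagonal ν *ᵥ g x = x ⬝ᵥ diagonal μ *ᵥ x) :
    Fintype.card {i // 0 < μ i} ≤ Fintype.card {j // 0 < ν j} := by
  let extend : ({i // 0 < μ i} → ℝ) →ₗ[ℝ] m → ℝ :=
    LinearMap.pi fun i => if h : 0 < μ i then LinearMap.proj ⟨i, h⟩ else 0
  let restrict : (n → ℝ) →ₗ[ℝ] {j // 0 < ν j} → ℝ := LinearMap.funLeft ℝ ℝ Subtype.val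
  have hinj : Function.Injective (restrict ∘ₗ g ∘ₗ extend) := by
    rw [← LinearMap.ker_eq_bot, Submodule.eq_bot_iff]
    intro c hc
    have hzero : ∀ j, 0 < ν j → g (extend c) j = 0 := fun j hj => congrFun hc ⟨j, hj⟩
    have hterm : ∀ i, 0 ≤ μ i * extend c i ^ 2 := fun i => by
      by_cases h : 0 < μ i
      · simpa [extend, h] using mul_nonneg h.le (sq_nonneg (c ⟨i, h⟩))
      · simp [extend, h]
    have hle : ∑ i, μ i * extend c i ^ 2 ≤ 0 := by
      rw [← dotProduct_diagonal_mulVec_self, ← hg, dotProduct_diagonal_mulVec_self]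
      refine Finset.sum_nonpos fun j _ => ?_
      by_cases h : 0 < ν j
      · simp [hzero j h]
      · exact mul_nonpos_of_nonpos_of_nonneg (not_lt.1 h) (sq_nonneg _)
    have hsum := (Finset.sum_eq_zero_iff_of_nonneg fun i _ => hterm i).1
      (le_antisymm hle (Finset.sum_nonneg fun i _ => hterm i))
    ext ⟨i, hi⟩
    simpa [extend, hi, hi.ne'] using hsum i (Finset.mem_univ i)
  simpa using LinearMap.finrank_le_finrank_of_injective hinj

theorem Matrix.IsHermitian.quadForm_eigenvectorUnitary_mulVec [DecidableEq n]
    {A : Matrix n n ℝ} (hA : A.IsHermitian) (y : n → ℝ) :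
    (hA.eigenvectorUnitary *ᵥ y) ⬝ᵥ A *ᵥ (hA.eigenvectorUnitary *ᵥ y) =
      y ⬝ᵥ diagonal hA.eigenvalues *ᵥ y := by
  have h := hA.conjStarAlgAut_star_eigenvectorUnitary
  simp only [Unitary.conjStarAlgAut_apply, RCLike.ofReal_real_eq_id, Function.id_comp,
    Unitary.coe_star, transpose_transpose, star_eq_conjTranspose,
    conjTranspose_eq_transpose_of_trivial] at h
  rw [← h, ← mulVec_mulVec, ← mulVec_mulVec, dotProduct_transpose_mulVec, dotProduct_comm]

theorem pin_le_of_quadForm_comp [DecidableEq m] [DecidableEq n] {A : Matrix m m ℝ}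
    {B : Matrix n n ℝ} (hA : A.IsHermitian) (hB : B.IsHermitian) (g : (m → ℝ) →ₗ[ℝ] n → ℝ)
    (hg : ∀ x, g x ⬝ᵥ B *ᵥ g x = x ⬝ᵥ A *ᵥ x) :
    pin A ≤ pin B := by
  let g' := (star (hB.eigenvectorUnitary : Matrix n n ℝ)).mulVecLin ∘ₗ g ∘ₗ
    (hA.eigenvectorUnitary : Matrix m m ℝ).mulVecLin
  have hg' : ∀ y, g' y ⬝ᵥ diagonal hB.eigenvalues *ᵥ g' y =
      y ⬝ᵥ diagonal hA.eigenvalues *ᵥ y := fun y => by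
    rw [← hA.quadForm_eigenvectorUnitary_mulVec, ← hB.quadForm_eigenvectorUnitary_mulVec, ← hg]
    simp [g', mulVec_mulVec]
  have hg'_neg : ∀ y, g' y ⬝ᵥ diagonal (-hB.eigenvalues) *ᵥ g' y =
      y ⬝ᵥ diagonal (-hA.eigenvalues) *ᵥ y := fun y => by
    simpa only [dotProduct_diagonal_mulVec_self, Pi.neg_apply, neg_mul, Finset.sum_neg_distrib,
      neg_inj] using hg' y
  unfold pin
  rw [dif_pos hA, dif_pos hB, Prod.mk_le_mk]
  constructor
  · convert card_pos_le_of_quadForm_diagonal_comp g' hg'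
  · convert card_pos_le_of_quadForm_diagonal_comp g' hg'_neg using 1 <;>
      exact Fintype.card_congr (Equiv.subtypeEquivRight fun i => by simp)

theorem pin_eq_countP_roots_charpoly [DecidableEq n] {A : Matrix n n ℝ} (hA : A.IsHermitian) :
    pin A = (A.charpoly.roots.countP (0 < ·), A.charpoly.roots.countP (· < 0)) := by
  unfold pin
  rw [dif_pos hA, hA.roots_charpoly_eq_eigenvalues]
  simp [Multiset.countP_map, Fintype.card_subtype, Finset.card_def, RCLike.ofReal_real_eq_id]

theorem pin_reindex [DecidableEq m] [DecidableEq n] (e : m ≃ n) (A : Matrix m m ℝ) :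
    pin (reindex e e A) = pin A := by
  by_cases hA : A.IsHermitian
  · rw [pin_eq_countP_roots_charpoly hA,
      pin_eq_countP_roots_charpoly (A := reindex e e A) (hA.submatrix _), charpoly_reindex]
  · have hA' : ¬ (reindex e e A).IsHermitian := by
      rwa [reindex_apply, isHermitian_submatrix_equiv]
    unfold pin
    rw [dif_neg hA, dif_neg hA']

theorem pin_fromBlocks_zero [DecidableEq m] [DecidableEq n] {A : Matrix m m ℝ}
    {D : Matrix n n ℝ} (hA : A.IsHermitian) (hD : D.IsHermitian) :
    pin (fromBlocks A 0 0 D) = pin A + pin D := by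
  rw [pin_eq_countP_roots_charpoly (hA.fromBlocks conjTranspose_zero hD),
    pin_eq_countP_roots_charpoly hA, pin_eq_countP_roots_charpoly hD, charpoly_fromBlocks_zero₁₂,
    Polynomial.roots_mul ((charpoly_monic A).mul (charpoly_monic D)).ne_zero]
  simp [Multiset.countP_add]

theorem dotProduct_fromBlocks_mulVec_sumElim {R : Type*} [CommRing R]
    (A : Matrix m m R) (B : Matrix m n R) (C : Matrix n m R) (D : Matrix n n R)
    (a : m → R) (w : n → R) :
    Sum.elim a w ⬝ᵥ fromBlocks A B C D *ᵥ Sum.elim a w =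
      a ⬝ᵥ A *ᵥ a + a ⬝ᵥ B *ᵥ w + w ⬝ᵥ C *ᵥ a + w ⬝ᵥ D *ᵥ w := by
  rw [fromBlocks_mulVec, sumElim_dotProduct_sumElim]
  simp only [Sum.elim_comp_inl, Sum.elim_comp_inr, dotProduct_add]
  ring

end Inertia

theorem isHermitian_hyperbolic : (!![(0 : ℝ), 1; 1, 0]).IsHermitian := by
  rw [isHermitian_iff_isSymm]
  ext i j
  fin_cases i <;> fin_cases j <;> rfl

open Polynomial in
theorem pin_hyperbolic : pin !![(0 : ℝ), 1; 1, 0] = (1, 1) := by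
  have hfactor : (!![(0 : ℝ), 1; 1, 0]).charpoly = (X - C 1) * (X - C (-1)) := by
    rw [charpoly_fin_two]
    simp [trace_fin_two, det_fin_two]
    ring
  rw [pin_eq_countP_roots_charpoly isHermitian_hyperbolic, hfactor,
    roots_mul ((monic_X_sub_C _).mul (monic_X_sub_C _)).ne_zero, roots_X_sub_C, roots_X_sub_C]
  norm_num [Multiset.countP_eq_card_filter, Multiset.filter_singleton]

section Border

variable {m : Type*}

theorem isHermitian_border {B : Matrix m m ℝ} (hB : B.IsHermitian) (c : ℝ)
    (R : Matrix (Fin 1) m ℝ) : (fromBlocks !![c] R Rᵀ B).IsHermitian :=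
  IsHermitian.fromBlocks (by simp [isHermitian_iff_isSymm, IsSymm.ext_iff])
    (conjTranspose_eq_transpose_of_trivial R) hB

variable [Fintype m]

theorem quadForm_border (c : ℝ) (R : Matrix (Fin 1) m ℝ) (B : Matrix m m ℝ) (a : Fin 1 → ℝ)
    (w : m → ℝ) :
    Sum.elim a w ⬝ᵥ fromBlocks !![c] R Rᵀ B *ᵥ Sum.elim a w =
      c * a 0 ^ 2 + 2 * a 0 * (R *ᵥ w) 0 + w ⬝ᵥ B *ᵥ w := by
  rw [dotProduct_fromBlocks_mulVec_sumElim, dotProduct_transpose_mulVec]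
  simp [dotProduct, mulVec]
  ring

theorem quadForm_fromBlocks_hyperbolic (B : Matrix m m ℝ) (p : Fin 2 → ℝ) (w : m → ℝ) :
    Sum.elim p w ⬝ᵥ fromBlocks !![(0 : ℝ), 1; 1, 0] 0 0 B *ᵥ Sum.elim p w =
      2 * p 0 * p 1 + w ⬝ᵥ B *ᵥ w := by
  rw [dotProduct_fromBlocks_mulVec_sumElim]
  simp [dotProduct, mulVec, Fin.sum_univ_two]
  ring

theorem quadForm_add_smul_of_mulVec_eq_zero {B : Matrix m m ℝ} (hB : B.IsHermitian)
    {u : m → ℝ} (hu : B *ᵥ u = 0) (w : m → ℝ) (s : ℝ) :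
    (w + s • u) ⬝ᵥ B *ᵥ (w + s • u) = w ⬝ᵥ B *ᵥ w := by
  have huw : u ⬝ᵥ B *ᵥ w = 0 := by
    rw [← (isHermitian_iff_isSymm.1 hB).eq, dotProduct_transpose_mulVec, hu, dotProduct_zero]
  simp [mulVec_add, mulVec_smul, hu, add_dotProduct, huw]

variable [DecidableEq m]

theorem pin_border_le {B : Matrix m m ℝ} (hB : B.IsHermitian) (c : ℝ) (R : Matrix (Fin 1) m ℝ) :
    pin (fromBlocks !![c] R Rᵀ B) ≤ pin (fromBlocks !![(0 : ℝ), 1; 1, 0] 0 0 B) := by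
  let G : (Fin 1 ⊕ m → ℝ) →ₗ[ℝ] Fin 2 ⊕ m → ℝ :=
    { toFun x := Sum.elim ![x (.inl 0), c / 2 * x (.inl 0) + (R *ᵥ (x ∘ .inr)) 0] (x ∘ .inr)
      map_add' x y := by
        ext (i | i)
        · fin_cases i <;> simp [Pi.add_comp, mulVec_add]; ring
        · rfl
      map_smul' a x := by
        ext (i | i)
        · fin_cases i <;> simp [Pi.smul_comp, mulVec_smul]; ring
        · rfl }
  refine pin_le_of_quadForm_comp (isHermitian_border hB c R)
    (isHermitian_hyperbolic.fromBlocks conjTranspose_zero hB) G fun x => ?_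
  change Sum.elim _ _ ⬝ᵥ _ *ᵥ Sum.elim _ _ = _
  conv_rhs => rw [← Sum.elim_comp_inl_inr x]
  rw [quadForm_fromBlocks_hyperbolic, quadForm_border]
  simp
  ring

theorem pin_hyperbolic_le_border {B : Matrix m m ℝ} (hB : B.IsHermitian) (c : ℝ)
    (R : Matrix (Fin 1) m ℝ) {u : m → ℝ} (hu : B *ᵥ u = 0) (hRu : R *ᵥ u ≠ 0) :
    pin (fromBlocks !![(0 : ℝ), 1; 1, 0] 0 0 B) ≤ pin (fromBlocks !![c] R Rᵀ B) := by
  have hz : (R *ᵥ u) 0 ≠ 0 := fun h => hRu (funext fun i => by simpa [Subsingleton.elim i 0])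
  let σ (y : Fin 2 ⊕ m → ℝ) : ℝ :=
    (y (.inl 1) - c / 2 * y (.inl 0) - (R *ᵥ (y ∘ .inr)) 0) / (R *ᵥ u) 0
  let F : (Fin 2 ⊕ m → ℝ) →ₗ[ℝ] Fin 1 ⊕ m → ℝ :=
    { toFun y := Sum.elim (fun _ => y (.inl 0)) (y ∘ .inr + σ y • u)
      map_add' x y := by
        ext (i | i)
        · rfl
        · simp [σ, Pi.add_comp, mulVec_add]; ring
      map_smul' a x := by
        ext (i | i)
        · rfl
        · simp [σ, Pi.smul_comp, mulVec_smul]; ring }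
  refine pin_le_of_quadForm_comp (isHermitian_hyperbolic.fromBlocks conjTranspose_zero hB)
    (isHermitian_border hB c R) F fun y => ?_
  change Sum.elim _ _ ⬝ᵥ _ *ᵥ Sum.elim _ _ = _
  conv_rhs => rw [← Sum.elim_comp_inl_inr y]
  rw [quadForm_border, quadForm_fromBlocks_hyperbolic, quadForm_add_smul_of_mulVec_eq_zero hB hu]
  simp only [mulVec_add, mulVec_smul, Pi.add_apply, Pi.smul_apply, smul_eq_mul,
    Function.comp_apply, σ]
  field_simp
  ring

theorem pin_border_eq {B : Matrix m m ℝ} (hB : B.IsHermitian) (c : ℝ) (R : Matrix (Fin 1) m ℝ)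
    {u : m → ℝ} (hu : B *ᵥ u = 0) (hRu : R *ᵥ u ≠ 0) :
    pin (fromBlocks !![c] R Rᵀ B) = pin (fromBlocks !![(0 : ℝ), 1; 1, 0] 0 0 B) :=
  le_antisymm (pin_border_le hB c R) (pin_hyperbolic_le_border hB c R hu hRu)

end Border

def Equiv.sumLeftComm (α β γ : Type*) : α ⊕ β ⊕ γ ≃ β ⊕ α ⊕ γ :=
  (Equiv.sumAssoc α β γ).symm.trans
    (((Equiv.sumComm α β).sumCongr (Equiv.refl γ)).trans (Equiv.sumAssoc β α γ))

theorem fromBlocks_middle_eq_reindex {k l r : Type*} (A₁₁ : Matrix k k ℝ) (A₃₃ : Matrix r r ℝ)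
    (A₂₁ : Matrix l k ℝ) (A₂₃ : Matrix l r ℝ) (A₂₂ : Matrix l l ℝ) :
    fromBlocks A₁₁ (fromCols A₂₁ᵀ 0) (fromRows A₂₁ 0) (fromBlocks A₂₂ A₂₃ A₂₃ᵀ A₃₃) =
      reindex (Equiv.sumLeftComm l k r) (Equiv.sumLeftComm l k r)
        (fromBlocks A₂₂ (fromCols A₂₁ A₂₃) (fromCols A₂₁ A₂₃)ᵀ (fromBlocks A₁₁ 0 0 A₃₃)) := by
  ext (i | i | i) (j | j | j) <;> rfl

/-- Let `A₁₁`, `A₃₃` be symmetric, `A₂₁`, `A₂₃` row vectors and `a₂₂` a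
scalar, and suppose some `u ∈ ker (diag(A₁₁, A₃₃))` satisfies `[A₂₁, A₂₃] u ≠ 0`.  Then
`A = [[A₁₁, A₂₁ᵀ, 0],[A₂₁, a₂₂, A₂₃],[0, A₂₃ᵀ, A₃₃]]` has the same partial inertia as
`H ⊕ A₁₁ ⊕ A₃₃` (`H = [[0,1],[1,0]]`); in particular
`pin A = pin A₁₁ + pin A₃₃ + (1,1)`. -/
theorem stmt19 {k r : ℕ}
    (A₁₁ : Matrix (Fin k) (Fin k) ℝ) (A₃₃ : Matrix (Fin r) (Fin r) ℝ)
    (A₂₁ : Matrix (Fin 1) (Fin k) ℝ) (A₂₃ : Matrix (Fin 1) (Fin r) ℝ) (a₂₂ : ℝ)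
    (h11 : A₁₁ᵀ = A₁₁) (h33 : A₃₃ᵀ = A₃₃)
    (u : Fin k ⊕ Fin r → ℝ)
    (hu : (fromBlocks A₁₁ 0 0 A₃₃).mulVec u = 0)
    (hz : (fromCols A₂₁ A₂₃).mulVec u ≠ 0) :
    pin (fromBlocks A₁₁ (fromCols A₂₁ᵀ 0) (fromRows A₂₁ 0)
          (fromBlocks (!![a₂₂]) A₂₃ A₂₃ᵀ A₃₃)) =
      pin (fromBlocks (!![(0:ℝ), 1; 1, 0]) 0 0 (fromBlocks A₁₁ 0 0 A₃₃)) ∧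
    pin (fromBlocks A₁₁ (fromCols A₂₁ᵀ 0) (fromRows A₂₁ 0)
          (fromBlocks (!![a₂₂]) A₂₃ A₂₃ᵀ A₃₃)) =
      ((pin A₁₁).1 + (pin A₃₃).1 + 1, (pin A₁₁).2 + (pin A₃₃).2 + 1) := by
  have hA₁₁ : A₁₁.IsHermitian := isHermitian_iff_isSymm.2 h11
  have hA₃₃ : A₃₃.IsHermitian := isHermitian_iff_isSymm.2 h33
  have hB : (fromBlocks A₁₁ 0 0 A₃₃).IsHermitian := hA₁₁.fromBlocks conjTranspose_zero hA₃₃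
  have hpin : pin (fromBlocks A₁₁ (fromCols A₂₁ᵀ 0) (fromRows A₂₁ 0)
      (fromBlocks (!![a₂₂]) A₂₃ A₂₃ᵀ A₃₃)) =
      pin (fromBlocks (!![(0:ℝ), 1; 1, 0]) 0 0 (fromBlocks A₁₁ 0 0 A₃₃)) := by
    rw [fromBlocks_middle_eq_reindex, pin_reindex]
    exact pin_border_eq hB a₂₂ _ hu hz
  refine ⟨hpin, ?_⟩
  rw [hpin, pin_fromBlocks_zero isHermitian_hyperbolic hB, pin_fromBlocks_zero hA₁₁ hA₃₃,
    pin_hyperbolic]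
  ext <;> simp only [Prod.fst_add, Prod.snd_add] <;> ring
end
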